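/- arXiv:2009.04942 — 4 statements merged into one kernel-verified Lean document; each statement's English description precedes it below -/
import Mathlib

section
/- For every linear subspace W ⊆ ℝ^n and every z ∈ W, there exist h ≤ n and vectors g^1, …, g^h ∈ W such that z = g^1 + ⋯ + g^h, each g^k is sign-consistent with z, and the support of each g^k is a circuit of W. -/
open scoped BigOperators

variable {ι : Type*} [Fintype ι] [DecidableEq ι]

/-- The ℓ₁ norm of a vector. -/
noncomputable def norm1 (x : ι → ℝ) : ℝ := ∑ i, |x i|

/-- The ℓ∞ norm of a vector. -/
noncomputable def normInf (x : ι → ℝ) : ℝ := ⨆ i, |x i|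

/-- The ℓ₂ norm of a vector. -/
noncomputable def norm2 (x : ι → ℝ) : ℝ := Real.sqrt (∑ i, (x i) ^ 2)

/-- The componentwise negative part `max (-x) 0`. -/
noncomputable def vneg (x : ι → ℝ) : ι → ℝ := fun i => max (-(x i)) 0

/-- The componentwise positive part `max x 0`. -/
noncomputable def vpos (x : ι → ℝ) : ι → ℝ := fun i => max (x i) 0

/-- `y` is sign-consistent with `x`. -/
def SignConsistent (y x : ι → ℝ) : Prop :=
  (∀ i, 0 ≤ x i * y i) ∧ ∀ i, x i = 0 → y i = 0

/-- The subspace `ℝ^n_C` of vectors supported on `C`. -/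
def coordSubspace (C : Set ι) : Submodule ℝ (ι → ℝ) where
  carrier := {x | ∀ i ∉ C, x i = 0}
  zero_mem' := by intro i _; rfl
  add_mem' := by intro a b ha hb i hi; simp [ha i hi, hb i hi]
  smul_mem' := by intro c a ha i hi; simp [ha i hi]

/-- `C` is a circuit of the subspace `W`: `W ∩ ℝ^n_C` is one-dimensional and no
strict subset of `C` has this property. -/
def IsCircuit (W : Submodule ℝ (ι → ℝ)) (C : Set ι) : Prop :=
  Module.finrank ℝ ↥(W ⊓ coordSubspace C) = 1 ∧
  ∀ C' : Set ι, C' ⊂ C → Module.finrank ℝ ↥(W ⊓ coordSubspace C') ≠ 1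

/-- The circuit imbalance measure `κ_W`. -/
noncomputable def kappa (W : Submodule ℝ (ι → ℝ)) : ℝ :=
  sSup ({1} ∪ {r | ∃ C : Set ι, IsCircuit W C ∧ ∃ g ∈ W, g ≠ 0 ∧ {i | g i ≠ 0} = C ∧
    r = sSup ((fun i => |g i|) '' C) / sInf ((fun i => |g i|) '' C)})

/-- The matroidal closure of `K` with respect to `W`. -/
def clos (W : Submodule ℝ (ι → ℝ)) (K : Set ι) : Set ι :=
  K ∪ {j | j ∉ K ∧ ∃ C : Set ι, IsCircuit W C ∧ j ∈ C ∧ C ⊆ K ∪ {j}}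

/-- `z` is the minimum-norm lift `L_I^W(p)` of `p` to `W`:
`z ∈ W`, `z` agrees with `p` on `I`, and `z` has minimum ℓ₂-norm among such vectors. -/
def IsMinLift (W : Submodule ℝ (ι → ℝ)) (I : Finset ι) (p z : ι → ℝ) : Prop :=
  z ∈ W ∧ (∀ i ∈ I, z i = p i) ∧
  ∀ z' ∈ W, (∀ i ∈ I, z' i = p i) → norm2 z ≤ norm2 z'

/-- The ℓ₂→ℓ₂ operator norm of the lifting map `L_I^W` on `π_I(W)`. -/
noncomputable def liftOpNorm (W : Submodule ℝ (ι → ℝ)) (I : Finset ι) : ℝ :=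
  sSup {r | ∃ p z, IsMinLift W I p z ∧ r = norm2 z / Real.sqrt (∑ i ∈ I, (p i) ^ 2)}

/-- The condition number `χ̄_W = max{‖L_I^W‖ : ∅ ≠ I}`. -/
noncomputable def chiBar (W : Submodule ℝ (ι → ℝ)) : ℝ :=
  sSup {r | ∃ I : Finset ι, I.Nonempty ∧ r = liftOpNorm W I}

/-- The orthogonal complement of `W` in `ℝ^n`. -/
def orthComp (W : Submodule ℝ (ι → ℝ)) : Submodule ℝ (ι → ℝ) where
  carrier := {y | ∀ x ∈ W, ∑ i, x i * y i = 0}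
  zero_mem' := by intro x hx; simp
  add_mem' := by
    intro a b ha hb x hx
    simpa [mul_add, Finset.sum_add_distrib, ha x hx] using hb x hx
  smul_mem' := by
    intro c a ha x hx
    have h := ha x hx
    have : ∑ i, x i * (c • a) i = c * ∑ i, x i * a i := by
      rw [Finset.mul_sum]
      refine Finset.sum_congr rfl fun i _ => ?_
      simp [Pi.smul_apply, smul_eq_mul]; ring
    simpa [this, h]

/-- `x` is a feasible solution to the primal program of Primal-Dual(W,d,c). -/
def PrimalFeasible (W : Submodule ℝ (ι → ℝ)) (d x : ι → ℝ) : Prop :=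
  x - d ∈ W ∧ ∀ i, 0 ≤ x i

/-- `s` is a feasible solution to the dual program of Primal-Dual(W,d,c). -/
def DualFeasible (W : Submodule ℝ (ι → ℝ)) (c s : ι → ℝ) : Prop :=
  s - c ∈ orthComp W ∧ ∀ i, 0 ≤ s i

/-- `(x,s)` is an optimal solution to Primal-Dual(W,d,c): both feasible and `⟨x,s⟩ = 0`. -/
def IsOptimalPair (W : Submodule ℝ (ι → ℝ)) (d c x s : ι → ℝ) : Prop :=
  PrimalFeasible W d x ∧ DualFeasible W c s ∧ ∑ i, x i * s i = 0

/-- The ℓ₂→ℓ₂ operator norm of a matrix. -/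
noncomputable def l2OpNorm {m n : Type*} [Fintype m] [Fintype n] [DecidableEq n]
    (A : Matrix m n ℝ) : ℝ :=
  ‖LinearMap.toContinuousLinearMap (Matrix.toEuclideanLin A)‖

/-- The max-norm (largest absolute value of an entry) of a matrix. -/
noncomputable def matMaxNorm {m n : Type*} [Fintype m] [Fintype n] (A : Matrix m n ℝ) : ℝ :=
  ⨆ i, ⨆ j, |A i j|

/-!
A nonzero `v ∈ W` of inclusion-minimal support is supported on a circuit. If `v ∈ W` is nonzero
with `supp v ⊆ supp z`, the pivot `z - (z j / v j) • v`, where `j` minimises `|z i / v i|` over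
`supp v`, is sign-consistent with `z` and vanishes at `j`. Pivoting with vectors of strictly
smaller support until none is left yields a circuit vector sign-consistent with `z`; subtracting
the largest admissible multiple of it and recursing gives the decomposition, with one term per
coordinate removed from the support.
-/

open Function

section CircuitDecomposition

variable {α : Type*}

theorem mem_coordSubspace {C : Set α} {x : α → ℝ} :
    x ∈ coordSubspace C ↔ support x ⊆ C :=
  support_subset_iff'.symm

namespace SignConsistent

theorem refl (z : α → ℝ) : SignConsistent z z :=
  ⟨fun i => mul_self_nonneg (z i), fun _ h => h⟩

theorem trans {y w z : α → ℝ} (hyw : SignConsistent y w) (hwz : SignConsistent w z) :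
    SignConsistent y z := by
  refine ⟨fun i => ?_, fun i hi => hyw.2 i (hwz.2 i hi)⟩
  rcases eq_or_ne (w i) 0 with hwi | hwi
  · simp [hyw.2 i hwi]
  · have := mul_nonneg (hwz.1 i) (hyw.1 i)
    exact nonneg_of_mul_nonneg_right (by nlinarith) (mul_self_pos.2 hwi)

theorem support_subset {y z : α → ℝ} (h : SignConsistent y z) : support y ⊆ support z :=
  fun i hy hz => hy (h.2 i hz)

theorem const_smul {w z : α → ℝ} (h : SignConsistent w z) {c : ℝ} (hc : 0 ≤ c) :
    SignConsistent (c • w) z :=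
  ⟨fun i => by simpa [mul_left_comm] using mul_nonneg hc (h.1 i),
    fun i hi => by simp [h.2 i hi]⟩

theorem div_nonneg {w z : α → ℝ} (h : SignConsistent w z) (i : α) : 0 ≤ z i / w i :=
  div_nonneg_iff.2 (mul_nonneg_iff.1 (h.1 i))

end SignConsistent

theorem signConsistent_sub_smul_of_abs_le {z v : α → ℝ} {c : ℝ}
    (h : ∀ i, |c * v i| ≤ |z i|) :
    SignConsistent (z - c • v) z := by
  refine ⟨fun i => ?_, fun i hi => ?_⟩
  · have hle : |z i * (c * v i)| ≤ z i * z i := by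
      rw [abs_mul, ← abs_mul_abs_self]
      exact mul_le_mul_of_nonneg_left (h i) (abs_nonneg _)
    simp only [Pi.sub_apply, Pi.smul_apply, smul_eq_mul, mul_sub]
    linarith [le_abs_self (z i * (c * v i))]
  · have : c * v i = 0 := abs_nonpos_iff.1 (by simpa [hi] using h i)
    simp [hi, this]

theorem exists_pivot [Finite α] {z v : α → ℝ} (hv : v ≠ 0) (hvz : support v ⊆ support z) :
    ∃ j ∈ support v, SignConsistent (z - (z j / v j) • v) z ∧
      support (z - (z j / v j) • v) ⊂ support z := by
  obtain ⟨j, hj, hmin⟩ := Set.exists_min_image (support v) (fun i => |z i / v i|)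
    (Set.toFinite _) (support_nonempty_iff.2 hv)
  have hle : ∀ i, |z j / v j * v i| ≤ |z i| := fun i => by
    rcases eq_or_ne (v i) 0 with hi | hi
    · simp [hi]
    · calc |z j / v j * v i| = |z j / v j| * |v i| := abs_mul _ _
        _ ≤ |z i / v i| * |v i| := mul_le_mul_of_nonneg_right (hmin i hi) (abs_nonneg _)
        _ = |z i| := by rw [← abs_mul, div_mul_cancel₀ _ hi]
  have hsc := signConsistent_sub_smul_of_abs_le hle
  refine ⟨j, hj, hsc, (Set.ssubset_iff_of_subset hsc.support_subset).2 ⟨j, hvz hj, ?_⟩⟩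
  simp [div_mul_cancel₀ _ (mem_support.1 hj)]

theorem isCircuit_support_of_minimal {W : Submodule ℝ (α → ℝ)} {v : α → ℝ}
    (hv : v ∈ W) (hv0 : v ≠ 0) (hmin : ∀ u ∈ W, support u ⊂ support v → u = 0) :
    IsCircuit W (support v) := by
  obtain ⟨i, hi⟩ := support_nonempty_iff.2 hv0
  have hspan : W ⊓ coordSubspace (support v) = ℝ ∙ v := by
    refine le_antisymm (fun u hu => ?_) ?_
    · obtain ⟨huW, huv⟩ := Submodule.mem_inf.1 hu
      set u' := u - (u i / v i) • v
      have hsub : support u' ⊆ support v := (support_sub _ _).trans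
        (Set.union_subset (mem_coordSubspace.1 huv) (support_smul_subset_right _ _))
      have hi' : i ∉ support u' := by simp [u', div_mul_cancel₀ _ (mem_support.1 hi)]
      have hu' : u' = 0 := hmin u' (W.sub_mem huW (W.smul_mem _ hv))
        ((Set.ssubset_iff_of_subset hsub).2 ⟨i, hi, hi'⟩)
      exact Submodule.mem_span_singleton.2 ⟨u i / v i, (sub_eq_zero.1 hu').symm⟩
    · exact (Submodule.span_singleton_le_iff_mem _ _).2
        (Submodule.mem_inf.2 ⟨hv, mem_coordSubspace.2 subset_rfl⟩)
  refine ⟨by rw [hspan, finrank_span_singleton hv0], fun C hC => ?_⟩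
  have hbot : W ⊓ coordSubspace C = ⊥ := eq_bot_iff.2 fun u hu => by
    obtain ⟨huW, huC⟩ := Submodule.mem_inf.1 hu
    exact hmin u huW ((mem_coordSubspace.1 huC).trans_ssubset hC)
  rw [hbot, finrank_bot]
  exact zero_ne_one

theorem exists_signConsistent_circuit [Finite α] {W : Submodule ℝ (α → ℝ)} {z : α → ℝ}
    (hz : z ∈ W) (hz0 : z ≠ 0) :
    ∃ w ∈ W, w ≠ 0 ∧ SignConsistent w z ∧ IsCircuit W (support w) := by
  induction hS : support z using WellFoundedLT.induction generalizing z with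
  | _ S ih =>
    subst hS
    by_cases hmin : ∀ u ∈ W, support u ⊂ support z → u = 0
    · exact ⟨z, hz, hz0, .refl z, isCircuit_support_of_minimal hz hz0 hmin⟩
    push Not at hmin
    obtain ⟨u, hu, hu_ss, hu0⟩ := hmin
    obtain ⟨j, -, hsc, hss⟩ := exists_pivot hu0 hu_ss.subset
    have hz'0 : z - (z j / u j) • u ≠ 0 := fun h =>
      hu_ss.not_subset (sub_eq_zero.1 h ▸ support_smul_subset_right _ _)
    obtain ⟨w, hw, hw0, hwz, hwC⟩ := ih _ hss (W.sub_mem hz (W.smul_mem _ hu)) hz'0 rfl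
    exact ⟨w, hw, hw0, hwz.trans hsc, hwC⟩

theorem exists_signConsistent_circuit_decomposition [Finite α] {W : Submodule ℝ (α → ℝ)}
    {z : α → ℝ} (hz : z ∈ W) :
    ∃ (h : ℕ) (g : Fin h → α → ℝ), h ≤ (support z).ncard ∧ z = ∑ k, g k ∧
      ∀ k, g k ∈ W ∧ SignConsistent (g k) z ∧ IsCircuit W (support (g k)) := by
  induction hS : support z using WellFoundedLT.induction generalizing z with
  | _ S ih =>
    subst hS
    rcases eq_or_ne z 0 with rfl | hz0
    · exact ⟨0, Fin.elim0, Nat.zero_le _, by simp, fun k => k.elim0⟩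
    obtain ⟨w, hw, hw0, hwz, hwC⟩ := exists_signConsistent_circuit hz hz0
    obtain ⟨j, hj, hsc, hss⟩ := exists_pivot hw0 hwz.support_subset
    have hc : z j / w j ≠ 0 := div_ne_zero (hwz.support_subset hj) hj
    obtain ⟨h, g, hh, hsum, hg⟩ := ih _ hss (W.sub_mem hz (W.smul_mem _ hw)) rfl
    refine ⟨h + 1, Fin.cons ((z j / w j) • w) g, ?_, ?_, Fin.cases ?_ fun k => ?_⟩
    · exact Nat.succ_le_of_lt (hh.trans_lt (Set.ncard_lt_ncard hss))
    · rw [Fin.sum_cons, ← hsum, add_sub_cancel]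
    · refine ⟨W.smul_mem _ hw, hwz.const_smul (hwz.div_nonneg j), ?_⟩
      rwa [Fin.cons_zero, support_const_smul_of_ne_zero _ _ hc]
    · obtain ⟨hgW, hgz, hgC⟩ := hg k
      exact ⟨hgW, hgz.trans hsc, hgC⟩

end CircuitDecomposition

/-- sign-consistent circuit decomposition: every `z ∈ W` can be written
as a sum of at most `n` vectors of `W`, each sign-consistent with `z` and supported
on a circuit of `W`. -/
theorem sign_consistent_circuit_decomposition {n : ℕ}
    (W : Submodule ℝ (Fin n → ℝ)) (z : Fin n → ℝ) (hz : z ∈ W) :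
    ∃ (h : ℕ) (g : Fin h → (Fin n → ℝ)), h ≤ n ∧ z = ∑ k, g k ∧
      ∀ k, g k ∈ W ∧ SignConsistent (g k) z ∧ IsCircuit W {i | g k i ≠ 0} := by
  obtain ⟨h, g, hh, hsum, hg⟩ := exists_signConsistent_circuit_decomposition hz
  refine ⟨h, g, hh.trans ?_, hsum, hg⟩
  simpa using Set.ncard_le_card (support z)
end

section
/- Let A ∈ ℝ^{m×n} with rank(A) = m. Then sup{‖Aᵀ(ADAᵀ)^{−1}AD‖ : D an n×n positive definite diagonal matrix} = max{‖A_B^{−1}A‖ : A_B a nonsingular m×m column-submatrix of A}, where ‖·‖ denotes the ℓ₂→ℓ₂ operator norm. -/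
open scoped BigOperators

variable {ι : Type*} [Fintype ι] [DecidableEq ι]

/-!
By Cauchy–Binet, `m! · adj(A D Aᵀ) · A D` expands as a sum over all `p : Fin m → Fin n` of
`det (D_p) · det (A_p) · adj(A_p)ᵀ · P_p`, where `A_p` is the column-submatrix of `A` picked by
`p` and `P_p = (1 : Matrix n n ℝ).submatrix p id` selects the columns `p`. Hence `Aᵀ (A D Aᵀ)⁻¹ A D` is a convex
combination of the matrices `(A_p⁻¹ A)ᵀ P_p`, with weights proportional to `det (D_p) det (A_p)²`.
As `P_p` has orthonormal rows, `‖(A_p⁻¹ A)ᵀ P_p‖ = ‖A_p⁻¹ A‖`, which bounds the supremum by the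
maximum over bases. Conversely, for a basis `B`, letting the weights off `B` tend to `0` makes
`Aᵀ (A D Aᵀ)⁻¹ A D` tend to `(A_B⁻¹ A)ᵀ P_B`, whose norm is `‖A_B⁻¹ A‖`.
-/

open Matrix Finset Filter Topology
open scoped Matrix.Norms.L2Operator

namespace Matrix

variable {l m n : Type*}

section CommRing

variable {R : Type*} [CommRing R] [Fintype m] [DecidableEq m] [Fintype n]

theorem det_mul_eq_sum_det_submatrix_mul_prod (A : Matrix m n R) (C : Matrix n m R) :
    (A * C).det = ∑ p : m → n, (A.submatrix id p).det * ∏ i, C (p i) i := by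
  simp only [det_apply', mul_apply, prod_univ_sum, mul_sum, Fintype.piFinset_univ, sum_mul,
    prod_mul_distrib]
  rw [sum_comm]
  simp [mul_assoc]

/-- Cauchy–Binet, summed over all maps `p` rather than over `m`-subsets of columns: each subset is
counted once per ordering, and non-injective `p` contribute `0`. -/
theorem factorial_mul_det_mul (A : Matrix m n R) (C : Matrix n m R) :
    ((Fintype.card m).factorial : R) * (A * C).det =
      ∑ p : m → n, (A.submatrix id p).det * (C.submatrix p id).det := by
  symm
  calc ∑ p : m → n, (A.submatrix id p).det * (C.submatrix p id).det
      = ∑ σ : Equiv.Perm m, ∑ p : m → n,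
          (A.submatrix id (p ∘ σ)).det * ∏ i, C ((p ∘ σ) i) i := by
        simp only [det_apply' (C.submatrix _ id), mul_sum]
        rw [sum_comm]
        refine sum_congr rfl fun σ _ => sum_congr rfl fun p _ => ?_
        have hperm : (A.submatrix id (p ∘ σ)).det = Equiv.Perm.sign σ * (A.submatrix id p).det :=
          det_permute' σ (A.submatrix id p)
        rw [hperm]
        simp [mul_assoc, mul_left_comm]
    _ = ∑ σ : Equiv.Perm m, (A * C).det := by
        refine sum_congr rfl fun σ _ => ?_
        rw [det_mul_eq_sum_det_submatrix_mul_prod]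
        exact Fintype.sum_equiv (Equiv.arrowCongr σ.symm (Equiv.refl n)) _ _ fun p => rfl
    _ = _ := by simp [Fintype.card_perm]

variable [DecidableEq n]

theorem factorial_smul_adjugate_mul_mul_self (X : Matrix m n R) (C : Matrix n m R) :
    ((Fintype.card m).factorial : R) • ((X * C).adjugate * X) =
      ∑ p : m → n, (X.submatrix id p).det •
        ((C.submatrix p id).adjugate * (1 : Matrix n n R).submatrix p id) := by
  ext k j
  -- Cramer's rule turns both sides into determinants with column `k` replaced.
  have hcol : (X * C).updateCol k (fun i => X i j) = X * C.updateCol k (Pi.single j 1) := by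
    rw [mul_updateCol, mulVec_single_one]
    rfl
  have hsub : ∀ p : m → n, (C.updateCol k (Pi.single j 1)).submatrix p id =
      (C.submatrix p id).updateCol k (fun t => (1 : Matrix n n R) (p t) j) := by
    intro p
    ext a b
    by_cases hb : b = k <;> simp [hb, one_apply, Pi.single_apply]
  calc _ = ((Fintype.card m).factorial : R) * (X * C.updateCol k (Pi.single j 1)).det := by
        rw [smul_apply, smul_eq_mul, ← hcol, ← cramer_apply, cramer_eq_adjugate_mulVec]
        rfl
    _ = _ := by
        rw [factorial_mul_det_mul, Matrix.sum_apply]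
        refine sum_congr rfl fun p _ => ?_
        rw [hsub, ← cramer_apply, cramer_eq_adjugate_mulVec]
        rfl

theorem det_submatrix_mul_diagonal (A : Matrix m n R) (d : n → R) (p : m → n) :
    ((A * diagonal d).submatrix id p).det = (∏ i, d (p i)) * (A.submatrix id p).det := by
  have : (A * diagonal d).submatrix id p = A.submatrix id p * diagonal (d ∘ p) := by
    ext i j; simp
  rw [this, det_mul, det_diagonal, mul_comm]
  rfl

theorem factorial_mul_det_mul_diagonal_mul_transpose (A : Matrix m n R) (d : n → R) :
    ((Fintype.card m).factorial : R) * (A * diagonal d * Aᵀ).det =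
      ∑ p : m → n, (∏ i, d (p i)) * (A.submatrix id p).det ^ 2 := by
  rw [factorial_mul_det_mul]
  refine sum_congr rfl fun p _ => ?_
  rw [det_submatrix_mul_diagonal, ← transpose_submatrix, det_transpose]
  ring

end CommRing

theorem injective_of_isUnit_det_submatrix {R : Type*} [CommRing R] [Nontrivial R] [Fintype m]
    [DecidableEq m] {A : Matrix m n R} {p : m → n} (hp : IsUnit (A.submatrix id p).det) :
    Function.Injective p := fun i j hij => by
  by_contra hne
  exact hp.ne_zero (det_zero_of_column_eq hne fun k => by simp [hij])

theorem submatrix_one_mul {R : Type*} [Semiring R] [Fintype n] [DecidableEq n] (p : m → n)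
    (N : Matrix n l R) : (1 : Matrix n n R).submatrix p id * N = N.submatrix p id :=
  one_submatrix_mul p (Equiv.refl n) N

section IndicatorWeights

variable [Fintype m] [Fintype n] [DecidableEq n]

theorem mul_diagonal_ite_mem_range {R : Type*} [Semiring R] (A : Matrix m n R) {p : m → n}
    (hp : Function.Injective p) :
    A * diagonal (fun j => if j ∈ Set.range p then (1 : R) else 0) =
      A.submatrix id p * (1 : Matrix n n R).submatrix p id := by
  ext i j
  rw [mul_diagonal, mul_apply]
  by_cases hj : j ∈ Set.range p
  · obtain ⟨k, rfl⟩ := hj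
    rw [sum_eq_single k (fun t _ ht => by simp [hp.ne ht]) (by simp)]
    simp [one_apply]
  · rw [if_neg hj, mul_zero, sum_eq_zero fun t _ => ?_]
    simp [show p t ≠ j from fun h => hj ⟨t, h⟩]

theorem mul_diagonal_ite_mem_range_mul_transpose {R : Type*} [CommSemiring R] (A : Matrix m n R)
    {p : m → n} (hp : Function.Injective p) :
    A * diagonal (fun j => if j ∈ Set.range p then (1 : R) else 0) * Aᵀ =
      A.submatrix id p * (A.submatrix id p)ᵀ := by
  rw [mul_diagonal_ite_mem_range A hp, Matrix.mul_assoc, submatrix_one_mul, transpose_submatrix]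

theorem transpose_mul_inv_mul_diagonal_ite_mem_range {K : Type*} [Field K] [DecidableEq m]
    (A : Matrix m n K) {p : m → n} (hp : IsUnit (A.submatrix id p).det) :
    Aᵀ * (A * diagonal (fun j => if j ∈ Set.range p then (1 : K) else 0) * Aᵀ)⁻¹ *
        (A * diagonal (fun j => if j ∈ Set.range p then (1 : K) else 0)) =
      ((A.submatrix id p)⁻¹ * A)ᵀ * (1 : Matrix n n K).submatrix p id := by
  have hinj := injective_of_isUnit_det_submatrix hp
  rw [mul_diagonal_ite_mem_range_mul_transpose A hinj, mul_diagonal_ite_mem_range A hinj,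
    Matrix.mul_inv_rev, transpose_mul, transpose_nonsing_inv]
  simp only [Matrix.mul_assoc, nonsing_inv_mul_cancel_left _ _ hp]

end IndicatorWeights

section Field

variable {K : Type*} [Field K] [Fintype m] [DecidableEq m] [Fintype n] [DecidableEq n]

theorem det_sq_smul_inv (M : Matrix m m K) : M.det ^ 2 • M⁻¹ = M.det • M.adjugate := by
  rcases eq_or_ne M.det 0 with h | h
  · simp [h]
  · rw [inv_def, Ring.inverse_eq_inv, smul_smul, sq, mul_assoc, mul_inv_cancel₀ h, mul_one]

theorem transpose_mul_inv_mul_eq_sum [CharZero K] (A : Matrix m n K) (d : n → K) :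
    Aᵀ * (A * diagonal d * Aᵀ)⁻¹ * (A * diagonal d) =
      ∑ p : m → n, ((∏ i, d (p i)) * (A.submatrix id p).det ^ 2 /
          ((Fintype.card m).factorial * (A * diagonal d * Aᵀ).det)) •
        (((A.submatrix id p)⁻¹ * A)ᵀ * (1 : Matrix n n K).submatrix p id) := by
  set c : K := ((Fintype.card m).factorial : K)
  have hc : c ≠ 0 := Nat.cast_ne_zero.mpr (Nat.factorial_ne_zero _)
  have hterm : ∀ p : m → n, ((A * diagonal d).submatrix id p).det •
      (Aᵀ * ((Aᵀ.submatrix p id).adjugate * (1 : Matrix n n K).submatrix p id)) =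
      ((∏ i, d (p i)) * (A.submatrix id p).det ^ 2) •
        (((A.submatrix id p)⁻¹ * A)ᵀ * (1 : Matrix n n K).submatrix p id) := by
    intro p
    have hq := congrArg transpose (det_sq_smul_inv (A.submatrix id p))
    rw [transpose_smul, transpose_smul, adjugate_transpose] at hq
    rw [det_submatrix_mul_diagonal, ← transpose_submatrix, transpose_mul, Matrix.mul_assoc]
    calc _ = (∏ i, d (p i)) • (Aᵀ * (((A.submatrix id p).det • (A.submatrix id p)ᵀ.adjugate) *
          (1 : Matrix n n K).submatrix p id)) := by
          rw [Matrix.smul_mul, Matrix.mul_smul, smul_smul]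
      _ = _ := by
          rw [← hq, Matrix.smul_mul, Matrix.mul_smul, smul_smul]
  calc Aᵀ * (A * diagonal d * Aᵀ)⁻¹ * (A * diagonal d)
      = ((A * diagonal d * Aᵀ).det)⁻¹ • c⁻¹ •
          (Aᵀ * (c • ((A * diagonal d * Aᵀ).adjugate * (A * diagonal d)))) := by
        rw [Matrix.mul_smul, smul_smul c⁻¹, inv_mul_cancel₀ hc, one_smul, inv_def,
          Ring.inverse_eq_inv, Matrix.mul_smul, Matrix.smul_mul, Matrix.mul_assoc Aᵀ]
    _ = _ := by
        rw [factorial_smul_adjugate_mul_mul_self, Matrix.mul_sum, smul_sum, smul_sum]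
        refine sum_congr rfl fun p _ => ?_
        rw [Matrix.mul_smul, hterm, smul_smul, smul_smul]
        congr 1
        field_simp

theorem isUnit_of_rank_eq_card {M : Matrix m m K} (h : M.rank = Fintype.card m) : IsUnit M := by
  have hrange : LinearMap.range M.mulVecLin = ⊤ :=
    Submodule.eq_top_of_finrank_eq (by rw [← rank, h, Module.finrank_fintype_fun_eq_card])
  exact mulVec_surjective_iff_isUnit.mp (LinearMap.range_eq_top.mp hrange)

end Field

section OrderedField

variable {K : Type*} [Field K] [LinearOrder K] [IsStrictOrderedRing K]
  [Fintype m] [DecidableEq m] [Fintype n]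

theorem exists_isUnit_det_submatrix_of_rank_eq_card {A : Matrix m n K}
    (hA : A.rank = Fintype.card m) : ∃ p : m → n, IsUnit (A.submatrix id p).det := by
  by_contra! h
  have hAAt : IsUnit (A * Aᵀ).det :=
    (isUnit_iff_isUnit_det _).mp (isUnit_of_rank_eq_card (by rw [rank_self_mul_transpose, hA]))
  have hzero : ((Fintype.card m).factorial : K) * (A * Aᵀ).det = 0 := by
    rw [factorial_mul_det_mul]
    exact sum_eq_zero fun p _ => by rw [not_not.mp (mt isUnit_iff_ne_zero.mpr (h p)), zero_mul]
  exact hAAt.ne_zero ((mul_eq_zero.mp hzero).resolve_left (by positivity))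

theorem det_mul_diagonal_mul_transpose_pos [DecidableEq n] (A : Matrix m n K) {d : n → K}
    (hd : ∀ i, 0 < d i) {p : m → n} (hp : IsUnit (A.submatrix id p).det) :
    0 < (A * diagonal d * Aᵀ).det := by
  have hsum : 0 < ((Fintype.card m).factorial : K) * (A * diagonal d * Aᵀ).det := by
    rw [factorial_mul_det_mul_diagonal_mul_transpose]
    exact sum_pos' (fun q _ => mul_nonneg (prod_nonneg fun i _ => (hd (q i)).le) (sq_nonneg _))
      ⟨p, mem_univ _, mul_pos (prod_pos fun i _ => hd (p i)) (sq_pos_of_ne_zero hp.ne_zero)⟩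
  exact pos_of_mul_pos_right hsum (by positivity)

end OrderedField

section L2OpNorm

variable {𝕜 : Type*} [RCLike 𝕜]

theorem l2_opNorm_mul_of_mul_conjTranspose_eq_one [Fintype l] [Fintype m] [Fintype n]
    [DecidableEq m] [DecidableEq n] (Y : Matrix l m 𝕜) {P : Matrix m n 𝕜} (hP : P * Pᴴ = 1) :
    ‖Y * P‖ = ‖Y‖ := by
  have hPc : ‖Pᴴ‖ ≤ 1 := by
    have h := l2_opNorm_conjTranspose_mul_self Pᴴ
    rw [conjTranspose_conjTranspose, hP] at h
    have h1 : ‖(1 : Matrix m m 𝕜)‖ ≤ 1 :=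
      (l2_opNorm_diagonal (1 : m → 𝕜)).le.trans (pi_norm_const_le (1 : 𝕜)) |>.trans norm_one.le
    nlinarith [norm_nonneg Pᴴ]
  refine le_antisymm ?_ ?_
  · calc ‖Y * P‖ ≤ ‖Y‖ * ‖P‖ := l2_opNorm_mul Y P
      _ ≤ ‖Y‖ * 1 := by gcongr; rwa [← l2_opNorm_conjTranspose]
      _ = ‖Y‖ := mul_one _
  · calc ‖Y‖ = ‖Y * P * Pᴴ‖ := by rw [Matrix.mul_assoc, hP, Matrix.mul_one]
      _ ≤ ‖Y * P‖ * ‖Pᴴ‖ := l2_opNorm_mul _ _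
      _ ≤ ‖Y * P‖ := mul_le_of_le_one_right (norm_nonneg _) hPc

theorem submatrix_one_mul_conjTranspose [Fintype n] [DecidableEq m] [DecidableEq n] {p : m → n}
    (hp : Function.Injective p) :
    (1 : Matrix n n 𝕜).submatrix p id * ((1 : Matrix n n 𝕜).submatrix p id)ᴴ = 1 := by
  rw [conjTranspose_submatrix, conjTranspose_one, ← submatrix_mul _ _ _ _ _ Function.bijective_id,
    Matrix.mul_one, submatrix_one _ hp]

theorem l2_opNorm_mul_submatrix_one [Fintype l] [Fintype m] [Fintype n] [DecidableEq m]
    [DecidableEq n] (Y : Matrix l m 𝕜) {p : m → n} (hp : Function.Injective p) :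
    ‖Y * (1 : Matrix n n 𝕜).submatrix p id‖ = ‖Y‖ :=
  l2_opNorm_mul_of_mul_conjTranspose_eq_one Y (submatrix_one_mul_conjTranspose hp)

theorem l2_opNorm_transpose [Fintype m] [Fintype n] [DecidableEq m] [DecidableEq n]
    (Y : Matrix m n ℝ) : ‖Yᵀ‖ = ‖Y‖ := by
  rw [← conjTranspose_eq_transpose_of_trivial, l2_opNorm_conjTranspose]

end L2OpNorm

section Real

variable [Fintype m] [DecidableEq m] [Fintype n] [DecidableEq n]

theorem l2_opNorm_transpose_mul_inv_mul_le (A : Matrix m n ℝ) {d : n → ℝ} (hd : ∀ i, 0 < d i)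
    {r : ℝ} (hbasis : ∃ p : m → n, IsUnit (A.submatrix id p).det)
    (hr : ∀ p : m → n, IsUnit (A.submatrix id p).det → ‖(A.submatrix id p)⁻¹ * A‖ ≤ r) :
    ‖Aᵀ * (A * diagonal d * Aᵀ)⁻¹ * (A * diagonal d)‖ ≤ r := by
  obtain ⟨p₀, hp₀⟩ := hbasis
  have hM := det_mul_diagonal_mul_transpose_pos A hd hp₀
  have hfac : (0 : ℝ) < (Fintype.card m).factorial := by positivity
  rw [transpose_mul_inv_mul_eq_sum, ← mem_closedBall_zero_iff]
  refine (convex_closedBall 0 r).sum_mem (fun p _ => ?_) ?_ fun p _ => ?_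
  · exact div_nonneg (mul_nonneg (prod_nonneg fun i _ => (hd (p i)).le) (sq_nonneg _))
      (mul_pos hfac hM).le
  · rw [← sum_div, ← factorial_mul_det_mul_diagonal_mul_transpose, div_self (mul_pos hfac hM).ne']
  · rw [mem_closedBall_zero_iff]
    by_cases hp : IsUnit (A.submatrix id p).det
    · rw [l2_opNorm_mul_submatrix_one _ (injective_of_isUnit_det_submatrix hp),
        l2_opNorm_transpose]
      exact hr p hp
    · simpa [nonsing_inv_apply_not_isUnit _ hp] using (norm_nonneg _).trans (hr p₀ hp₀)

theorem continuousAt_transpose_mul_inv_mul (A : Matrix m n ℝ) {d₀ : n → ℝ}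
    (h : (A * diagonal d₀ * Aᵀ).det ≠ 0) :
    ContinuousAt (fun d => Aᵀ * (A * diagonal d * Aᵀ)⁻¹ * (A * diagonal d)) d₀ := by
  have hinv : ContinuousAt Inv.inv (A * diagonal d₀ * Aᵀ) :=
    continuousAt_matrix_inv _ (NormedRing.inverse_continuousAt (Units.mk0 _ h))
  have hM : ContinuousAt (fun d : n → ℝ => (A * diagonal d * Aᵀ)⁻¹) d₀ :=
    hinv.comp (f := fun d => A * diagonal d * Aᵀ) (by fun_prop)
  have hΦ : Continuous fun x : Matrix m m ℝ × (n → ℝ) => Aᵀ * x.1 * (A * diagonal x.2) := by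
    fun_prop
  exact hΦ.continuousAt.comp (f := fun d => ((A * diagonal d * Aᵀ)⁻¹, d))
    (hM.prodMk continuousAt_id)

theorem l2_opNorm_inv_mul_le_of_forall_pos (A : Matrix m n ℝ) {p : m → n}
    (hp : IsUnit (A.submatrix id p).det) {u : ℝ}
    (hu : ∀ d : n → ℝ, (∀ i, 0 < d i) → ‖Aᵀ * (A * diagonal d * Aᵀ)⁻¹ * (A * diagonal d)‖ ≤ u) :
    ‖(A.submatrix id p)⁻¹ * A‖ ≤ u := by
  have hinj := injective_of_isUnit_det_submatrix hp
  set γ : ℝ → n → ℝ := fun ε j => if j ∈ Set.range p then 1 else ε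
  have hγ : Continuous γ :=
    continuous_pi fun j => continuous_if_const _ (fun _ => continuous_const) fun _ => continuous_id
  have hdet : (A * diagonal (γ 0) * Aᵀ).det ≠ 0 := by
    rw [mul_diagonal_ite_mem_range_mul_transpose A hinj, det_mul, det_transpose]
    exact mul_ne_zero hp.ne_zero hp.ne_zero
  have hlim : Tendsto (fun ε => ‖Aᵀ * (A * diagonal (γ ε) * Aᵀ)⁻¹ * (A * diagonal (γ ε))‖)
      (𝓝[>] 0) (𝓝 ‖Aᵀ * (A * diagonal (γ 0) * Aᵀ)⁻¹ * (A * diagonal (γ 0))‖) :=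
    (continuous_norm.continuousAt.comp ((continuousAt_transpose_mul_inv_mul A hdet).comp
      hγ.continuousAt)).tendsto.mono_left nhdsWithin_le_nhds
  rw [transpose_mul_inv_mul_diagonal_ite_mem_range A hp, l2_opNorm_mul_submatrix_one _ hinj,
    l2_opNorm_transpose] at hlim
  refine le_of_tendsto hlim (eventually_nhdsWithin_of_forall fun ε hε => hu _ fun j => ?_)
  dsimp only [γ]
  split_ifs
  exacts [one_pos, hε]

end Real

end Matrix

/-- for a full row rank matrix `A`,
`sup{‖A.transpose(ADA.transpose)⁻¹AD‖ : D positive definite diagonal}` equals the maximum of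
`‖A_B⁻¹A‖` over nonsingular `m×m` column-submatrices `A_B` of `A`. -/
theorem chiBar_matrix_eq_max_basis {m n : ℕ} (A : Matrix (Fin m) (Fin n) ℝ)
    (hrank : A.rank = m) :
    IsGreatest
      {r | ∃ B : Fin m → Fin n, Function.Injective B ∧
        IsUnit (A.submatrix id B).det ∧
        r = l2OpNorm ((A.submatrix id B)⁻¹ * A)}
      (sSup {r | ∃ d : Fin n → ℝ, (∀ i, 0 < d i) ∧
        r = l2OpNorm (A.transpose * (A * Matrix.diagonal d * A.transpose)⁻¹ * (A * Matrix.diagonal d))}) := by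
  have hbasis : ∃ p : Fin m → Fin n, IsUnit (A.submatrix id p).det :=
    exists_isUnit_det_submatrix_of_rank_eq_card (by rwa [Fintype.card_fin])
  set basisNorms := {r | ∃ B : Fin m → Fin n, Function.Injective B ∧
    IsUnit (A.submatrix id B).det ∧ r = l2OpNorm ((A.submatrix id B)⁻¹ * A)}
  set weightedNorms := {r | ∃ d : Fin n → ℝ, (∀ i, 0 < d i) ∧
    r = l2OpNorm (A.transpose * (A * Matrix.diagonal d * A.transpose)⁻¹ * (A * Matrix.diagonal d))}
  have hfin : basisNorms.Finite :=
    (Set.finite_range fun B : Fin m → Fin n => l2OpNorm ((A.submatrix id B)⁻¹ * A)).subset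
      fun _ ⟨B, _, _, hr⟩ => ⟨B, hr.symm⟩
  have hne : basisNorms.Nonempty := by
    obtain ⟨p, hp⟩ := hbasis
    exact ⟨_, p, injective_of_isUnit_det_submatrix hp, hp, rfl⟩
  have hmax : IsGreatest basisNorms (sSup basisNorms) :=
    ⟨hne.csSup_mem hfin, fun _ hr => le_csSup hfin.bddAbove hr⟩
  suffices hsup : sSup weightedNorms = sSup basisNorms by rwa [hsup]
  refine IsLUB.csSup_eq ⟨?_, fun u hu => ?_⟩ ⟨_, fun _ => 1, fun _ => one_pos, rfl⟩
  · rintro _ ⟨d, hd, rfl⟩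
    exact l2_opNorm_transpose_mul_inv_mul_le A hd hbasis fun p hp =>
      hmax.2 ⟨p, injective_of_isUnit_det_submatrix hp, hp, rfl⟩
  · obtain ⟨p, -, hp, hpr⟩ := hmax.1
    rw [hpr]
    exact l2_opNorm_inv_mul_le_of_forall_pos A hp fun d hd => hu ⟨d, hd, rfl⟩
end

section
/- For a linear subspace W ⊆ ℝ^n with W ≠ {0}: κ_W = max{‖L_I^W(p)‖_∞ / ‖p‖_1 : ∅ ≠ I ⊆ {1,…,n}, p ∈ π_I(W), p ≠ 0}. -/
open scoped BigOperators

set_option linter.unusedSectionVars false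
set_option linter.unusedVariables false
set_option maxHeartbeats 1000000

variable {ι : Type*} [Fintype ι] [DecidableEq ι]

section Aux

open Module

lemma mem_coordSubspace_s4 {C : Set ι} {x : ι → ℝ} : x ∈ coordSubspace C ↔ ∀ i ∉ C, x i = 0 :=
  Iff.rfl

/-- support as a finset -/
noncomputable def fsupp (x : ι → ℝ) : Finset ι := ({i | x i ≠ 0}).toFinite.toFinset

lemma mem_fsupp {x : ι → ℝ} {i : ι} : i ∈ fsupp x ↔ x i ≠ 0 := by
  simp [fsupp]

lemma exists_max_abs (g : ι → ℝ) {C : Set ι} (hC : C.Nonempty) :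
    ∃ i ∈ C, (∀ j ∈ C, |g j| ≤ |g i|) ∧ sSup ((fun i => |g i|) '' C) = |g i| := by
  obtain ⟨i, hi, hmax⟩ := C.toFinite.toFinset.exists_max_image (fun i => |g i|)
    (by simpa [Set.Finite.toFinset_nonempty] using hC)
  rw [Set.Finite.mem_toFinset] at hi
  refine ⟨i, hi, fun j hj => hmax j (by simpa [Set.Finite.mem_toFinset] using hj), ?_⟩
  apply IsGreatest.csSup_eq
  refine ⟨⟨i, hi, rfl⟩, ?_⟩
  rintro r ⟨j, hj, rfl⟩
  exact hmax j (by simpa [Set.Finite.mem_toFinset] using hj)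

lemma exists_min_abs (g : ι → ℝ) {C : Set ι} (hC : C.Nonempty) :
    ∃ i ∈ C, (∀ j ∈ C, |g i| ≤ |g j|) ∧ sInf ((fun i => |g i|) '' C) = |g i| := by
  obtain ⟨i, hi, hmin⟩ := C.toFinite.toFinset.exists_min_image (fun i => |g i|)
    (by simpa [Set.Finite.toFinset_nonempty] using hC)
  rw [Set.Finite.mem_toFinset] at hi
  refine ⟨i, hi, fun j hj => hmin j (by simpa [Set.Finite.mem_toFinset] using hj), ?_⟩
  apply IsLeast.csInf_eq
  refine ⟨⟨i, hi, rfl⟩, ?_⟩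
  rintro r ⟨j, hj, rfl⟩
  exact hmin j (by simpa [Set.Finite.mem_toFinset] using hj)

/-- The sliding argument: given `y ∈ W` sign-consistent with `z` whose support is
card-minimal among such vectors, any `w ∈ W` supported inside `supp y` is a multiple of `y`. -/
lemma sliding {W : Submodule ℝ (ι → ℝ)} {z y w : ι → ℝ}
    (hyW : y ∈ W)
    (hmin : ∀ u ∈ W, u ≠ 0 → (∀ i, 0 ≤ u i * z i) → (∀ i, z i = 0 → u i = 0) →
      (fsupp y).card ≤ (fsupp u).card)
    (hsc : ∀ i, 0 ≤ y i * z i) (hsupp : ∀ i, z i = 0 → y i = 0)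
    (hwW : w ∈ W) (hwsupp : ∀ i, y i = 0 → w i = 0) (hnm : ∀ c : ℝ, w ≠ c • y) : False := by
  have hw0 : w ≠ 0 := by
    intro h; exact hnm 0 (by simp [h])
  obtain ⟨j, hj⟩ : ∃ j, w j ≠ 0 := by
    by_contra h; push_neg at h; exact hw0 (funext h)
  set S : Finset ι := fsupp w with hS
  have hjS : j ∈ S := mem_fsupp.mpr hj
  set t : ι → ℝ := fun i => -(y i) / (w i) with ht
  obtain ⟨i₀, hi₀S, hmin'⟩ := S.exists_min_image (fun i => |t i|) ⟨j, hjS⟩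
  have hyS : ∀ i ∈ S, y i ≠ 0 := by
    intro i hi hyi
    exact (mem_fsupp.mp hi) (hwsupp i hyi)
  have htne : ∀ i ∈ S, t i ≠ 0 := by
    intro i hi
    have := hyS i hi
    have := mem_fsupp.mp hi
    simp only [ht, ne_eq, div_eq_zero_iff, neg_eq_zero]
    tauto
  set τ := t i₀ with hτ
  have hτne : τ ≠ 0 := htne i₀ hi₀S
  set y'' : ι → ℝ := y + τ • w with hy''
  have hy''W : y'' ∈ W := W.add_mem hyW (W.smul_mem τ hwW)
  have hwval : ∀ i ∈ S, w i = -(y i) / t i := by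
    intro i hi
    have hwi : w i ≠ 0 := mem_fsupp.mp hi
    have hyi : y i ≠ 0 := hyS i hi
    simp only [ht]
    field_simp
  have hfact : ∀ i ∈ S, y'' i = (1 - τ / t i) * y i := by
    intro i hi
    have h1 := hwval i hi
    have h2 := htne i hi
    simp only [hy'', Pi.add_apply, Pi.smul_apply, smul_eq_mul, h1]
    field_simp
    ring
  have hcoef : ∀ i ∈ S, 0 ≤ 1 - τ / t i := by
    intro i hi
    have h1 : |τ| ≤ |t i| := hmin' i hi
    have h2 : (0:ℝ) < |t i| := abs_pos.mpr (htne i hi)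
    have h3 : τ / t i ≤ |τ| / |t i| := by
      calc τ / t i ≤ |τ / t i| := le_abs_self _
        _ = |τ| / |t i| := abs_div _ _
    have h4 : |τ| / |t i| ≤ 1 := (div_le_one h2).mpr h1
    linarith
  have hout : ∀ i, i ∉ S → y'' i = y i := by
    intro i hi
    have : w i = 0 := by by_contra h; exact hi (mem_fsupp.mpr h)
    simp [hy'', this]
  have hi₀ : y'' i₀ = 0 := by
    rw [hfact i₀ hi₀S, div_self hτne]
    ring
  have hy''0 : y'' ≠ 0 := by
    intro h
    apply hnm (-τ⁻¹)
    funext i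
    have : y i + τ * w i = 0 := by
      have := congrFun h i; simpa [hy''] using this
    have : w i = -τ⁻¹ * y i := by
      field_simp
      linarith
    simpa using this
  have hy''sc : ∀ i, 0 ≤ y'' i * z i := by
    intro i
    by_cases hi : i ∈ S
    · rw [hfact i hi]
      have := hcoef i hi
      have := hsc i
      nlinarith
    · rw [hout i hi]; exact hsc i
  have hy''supp : ∀ i, z i = 0 → y'' i = 0 := by
    intro i hzi
    have hyi : y i = 0 := hsupp i hzi
    have hiS : i ∉ S := fun h => hyS i h hyi
    rw [hout i hiS, hyi]
  have hsub : fsupp y'' ⊆ (fsupp y).erase i₀ := by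
    intro i hi
    have hyi'' : y'' i ≠ 0 := mem_fsupp.mp hi
    have hne : i ≠ i₀ := by rintro rfl; exact hyi'' hi₀
    have hyi : y i ≠ 0 := by
      by_cases hiS : i ∈ S
      · exact hyS i hiS
      · rw [hout i hiS] at hyi''; exact hyi''
    exact Finset.mem_erase.mpr ⟨hne, mem_fsupp.mpr hyi⟩
  have hi₀y : i₀ ∈ fsupp y := mem_fsupp.mpr (hyS i₀ hi₀S)
  have hcard : (fsupp y'').card < (fsupp y).card :=
    lt_of_le_of_lt (Finset.card_le_card hsub) (Finset.card_erase_lt_of_mem hi₀y)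
  exact absurd (hmin y'' hy''W hy''0 hy''sc hy''supp) (by omega)

end Aux

section Aux2

open Module

variable {ι : Type*} [Fintype ι] [DecidableEq ι]

/-- Every nonzero `z ∈ W` dominates a conformal circuit vector. -/
lemma exists_conformal_circuit {W : Submodule ℝ (ι → ℝ)} {z : ι → ℝ}
    (hzW : z ∈ W) (hz0 : z ≠ 0) :
    ∃ g ∈ W, g ≠ 0 ∧ (∀ i, 0 ≤ g i * z i) ∧ (∀ i, z i = 0 → g i = 0) ∧
      IsCircuit W {i | g i ≠ 0} := by
  classical
  set T : (ι → ℝ) → Prop := fun u =>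
    u ∈ W ∧ u ≠ 0 ∧ (∀ i, 0 ≤ u i * z i) ∧ (∀ i, z i = 0 → u i = 0) with hT
  have hzT : T z := ⟨hzW, hz0, fun i => mul_self_nonneg _, fun i h => h⟩
  set A : Set ℕ := {k | ∃ u, T u ∧ (fsupp u).card = k} with hA
  have hAne : A.Nonempty := ⟨_, z, hzT, rfl⟩
  obtain ⟨y, hyT, hycard⟩ : ∃ u, T u ∧ (fsupp u).card = sInf A := Nat.sInf_mem hAne
  obtain ⟨hyW, hy0, hysc, hysupp⟩ := hyT
  have hmin : ∀ u ∈ W, u ≠ 0 → (∀ i, 0 ≤ u i * z i) → (∀ i, z i = 0 → u i = 0) →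
      (fsupp y).card ≤ (fsupp u).card := by
    intro u h1 h2 h3 h4
    rw [hycard]
    exact Nat.sInf_le ⟨u, ⟨h1, h2, h3, h4⟩, rfl⟩
  set C : Set ι := {i | y i ≠ 0} with hC
  have hyC : y ∈ W ⊓ coordSubspace C := by
    refine ⟨hyW, fun i hi => ?_⟩
    simpa [hC] using hi
  refine ⟨y, hyW, hy0, hysc, hysupp, ?_, ?_⟩
  · -- finrank = 1
    have hv : (⟨y, hyC⟩ : ↥(W ⊓ coordSubspace C)) ≠ 0 := by
      intro h
      exact hy0 (by simpa using congrArg Subtype.val h)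
    have hle : finrank ℝ ↥(W ⊓ coordSubspace C) ≤ 1 := by
      apply finrank_le_one (⟨y, hyC⟩ : ↥(W ⊓ coordSubspace C))
      intro w
      by_contra hcon
      push_neg at hcon
      refine sliding hyW hmin hysc hysupp (w.2.1) (fun i hyi => w.2.2 i (by simpa [hC] using hyi)) ?_
      intro c hc
      apply hcon c
      exact Subtype.ext hc.symm
    have hge : 0 < finrank ℝ ↥(W ⊓ coordSubspace C) :=
      finrank_pos_iff.mpr (nontrivial_of_ne _ _ hv)
    exact le_antisymm hle hge
  · -- minimality
    intro C' hC' hrank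
    have hne : (W ⊓ coordSubspace C') ≠ ⊥ := by
      intro h
      rw [h] at hrank
      simp at hrank
    obtain ⟨w, hwP, hw0⟩ := (Submodule.ne_bot_iff _).mp hne
    obtain ⟨j₀, hj₀C, hj₀C'⟩ := Set.exists_of_ssubset hC'
    refine sliding hyW hmin hysc hysupp hwP.1
      (fun i hyi => hwP.2 i (fun hiC' => (by simpa [hC] using hC'.1 hiC' : y i ≠ 0) hyi)) ?_
    intro c hc
    have hc0 : c ≠ 0 := by
      rintro rfl
      simp at hc
      exact hw0 hc
    have h1 : w j₀ = 0 := hwP.2 j₀ hj₀C'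
    have h2 : y j₀ ≠ 0 := by simpa [hC] using hj₀C
    rw [hc] at h1
    simp only [Pi.smul_apply, smul_eq_mul] at h1
    rcases mul_eq_zero.mp h1 with h | h
    · exact hc0 h
    · exact h2 h

/-- First-order optimality: the min-norm lift is orthogonal to vectors of `W` vanishing on `I`. -/
lemma minLift_orth {W : Submodule ℝ (ι → ℝ)} {I : Finset ι} {p z : ι → ℝ}
    (hz : IsMinLift W I p z) {y : ι → ℝ} (hy : y ∈ W) (hyI : ∀ i ∈ I, y i = 0) :
    ∑ i, z i * y i = 0 := by
  set A := ∑ i, z i * y i with hA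
  set B := ∑ i, (y i) ^ 2 with hB
  have hBnn : 0 ≤ B := Finset.sum_nonneg fun i _ => sq_nonneg _
  have key : ∀ t : ℝ, 0 ≤ -2 * t * A + t ^ 2 * B := by
    intro t
    have hmem : z - t • y ∈ W := W.sub_mem hz.1 (W.smul_mem t hy)
    have hagree : ∀ i ∈ I, (z - t • y) i = p i := by
      intro i hi
      simp [hz.2.1 i hi, hyI i hi]
    have h1 : norm2 z ≤ norm2 (z - t • y) := hz.2.2 _ hmem hagree
    have h2 : ∑ i, (z i) ^ 2 ≤ ∑ i, (z i - t * y i) ^ 2 := by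
      have h3 : norm2 (z - t • y) = Real.sqrt (∑ i, (z i - t * y i) ^ 2) := by
        simp [norm2, sub_eq_add_neg]
      rw [h3, norm2] at h1
      exact (Real.sqrt_le_sqrt_iff (Finset.sum_nonneg fun i _ => sq_nonneg _)).mp h1
    have h4 : ∑ i, (z i - t * y i) ^ 2 = ∑ i, (z i) ^ 2 - 2 * t * A + t ^ 2 * B := by
      calc ∑ i, (z i - t * y i) ^ 2
          = ∑ i, ((z i) ^ 2 - 2 * t * (z i * y i) + t ^ 2 * (y i) ^ 2) :=
            Finset.sum_congr rfl fun i _ => by ring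
        _ = ∑ i, (z i) ^ 2 - 2 * t * A + t ^ 2 * B := by
            rw [Finset.sum_add_distrib, Finset.sum_sub_distrib, hA, hB, Finset.mul_sum,
              Finset.mul_sum]
    rw [h4] at h2
    linarith
  rcases eq_or_lt_of_le hBnn with hB0 | hB0
  · have hy0 : ∀ i, y i = 0 := by
      intro i
      have := (Finset.sum_eq_zero_iff_of_nonneg (fun i _ => sq_nonneg (y i))).mp hB0.symm i
        (Finset.mem_univ i)
      exact pow_eq_zero_iff (n := 2) (by norm_num) |>.mp this
    rw [hA]
    exact Finset.sum_eq_zero fun i _ => by rw [hy0 i, mul_zero]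
  · have h := key (A / B)
    have heq : -2 * (A / B) * A + (A / B) ^ 2 * B = -(A ^ 2) / B := by
      field_simp
      ring
    rw [heq] at h
    have : A ^ 2 ≤ 0 := by
      have h5 := mul_nonneg h hB0.le
      rw [div_mul_cancel₀ _ hB0.ne'] at h5
      linarith
    exact pow_eq_zero_iff (n := 2) (by norm_num) |>.mp (le_antisymm this (sq_nonneg A))

/-- Any two vectors in `W` with full support on a circuit `C` give the same imbalance ratio. -/
lemma circuit_ratio_eq {W : Submodule ℝ (ι → ℝ)} {C : Set ι}
    (hC : finrank ℝ ↥(W ⊓ coordSubspace C) = 1)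
    {g g' : ι → ℝ} (hg : g ∈ W) (hg0 : g ≠ 0) (hgs : {i | g i ≠ 0} = C)
    (hg' : g' ∈ W) (hg0' : g' ≠ 0) (hgs' : {i | g' i ≠ 0} = C) :
    sSup ((fun i => |g' i|) '' C) / sInf ((fun i => |g' i|) '' C)
      = sSup ((fun i => |g i|) '' C) / sInf ((fun i => |g i|) '' C) := by
  classical
  have hgP : g ∈ W ⊓ coordSubspace C := by
    refine ⟨hg, fun i hi => ?_⟩
    by_contra h
    exact hi (hgs ▸ h)
  have hg'P : g' ∈ W ⊓ coordSubspace C := by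
    refine ⟨hg', fun i hi => ?_⟩
    by_contra h
    exact hi (hgs' ▸ h)
  have hspan : Submodule.span ℝ {g} = W ⊓ coordSubspace C := by
    have hle : Submodule.span ℝ {g} ≤ W ⊓ coordSubspace C := by
      rw [Submodule.span_le, Set.singleton_subset_iff]; exact hgP
    rcases lt_or_eq_of_le hle with hlt | heq
    · exfalso
      have h1 : finrank ℝ ↥(Submodule.span ℝ ({g} : Set (ι → ℝ))) = 1 := finrank_span_singleton hg0
      have h2 := Submodule.finrank_lt_finrank_of_lt hlt
      omega
    · exact heq
  obtain ⟨c, hc⟩ : ∃ c : ℝ, c • g = g' := by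
    rw [← Submodule.mem_span_singleton, hspan]
    exact hg'P
  have hc0 : c ≠ 0 := by
    rintro rfl
    rw [← hc] at hg0'
    simp at hg0'
  have habs : ∀ i, |g' i| = |c| * |g i| := by
    intro i
    rw [← hc]
    simp [abs_mul]
  have hCne : C.Nonempty := by
    obtain ⟨i, hi⟩ : ∃ i, g i ≠ 0 := by
      by_contra h; push_neg at h; exact hg0 (funext h)
    exact ⟨i, hgs ▸ hi⟩
  obtain ⟨iM, hiM, hMub, hMeq⟩ := exists_max_abs g hCne
  obtain ⟨im, him, hmlb, hmeq⟩ := exists_min_abs g hCne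
  have hM' : sSup ((fun i => |g' i|) '' C) = |c| * |g iM| := by
    apply IsGreatest.csSup_eq
    constructor
    · exact ⟨iM, hiM, habs iM⟩
    · rintro r ⟨j, hj, rfl⟩
      exact le_trans (le_of_eq (habs j)) (mul_le_mul_of_nonneg_left (hMub j hj) (abs_nonneg c))
  have hm' : sInf ((fun i => |g' i|) '' C) = |c| * |g im| := by
    apply IsLeast.csInf_eq
    constructor
    · exact ⟨im, him, habs im⟩
    · rintro r ⟨j, hj, rfl⟩
      exact le_trans (mul_le_mul_of_nonneg_left (hmlb j hj) (abs_nonneg c))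
        (le_of_eq (habs j).symm)
  rw [hM', hm', hMeq, hmeq]
  rw [mul_div_mul_left _ _ (abs_ne_zero.mpr hc0)]

end Aux2

section Aux3

open Module

variable {ι : Type*} [Fintype ι] [DecidableEq ι]

lemma abs_sub_smul_helper {a b α : ℝ} (h : 0 ≤ b * a) (hb : b ≠ 0) (hα : 0 < α)
    (hle : α * |b| ≤ |a|) : |a - α * b| = |a| - α * |b| ∧ 0 ≤ (a - α * b) * a := by
  rcases hb.lt_or_gt with hbneg | hbpos
  · have hbabs : |b| = -b := abs_of_neg hbneg
    have ha : a ≤ 0 := by nlinarith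
    have haabs : |a| = -a := abs_of_nonpos ha
    have hd : a - α * b ≤ 0 := by nlinarith
    rw [abs_of_nonpos hd, hbabs, haabs]
    constructor
    · ring
    · nlinarith
  · have hbabs : |b| = b := abs_of_pos hbpos
    have ha : 0 ≤ a := by nlinarith
    have haabs : |a| = a := abs_of_nonneg ha
    have hd : 0 ≤ a - α * b := by nlinarith
    rw [abs_of_nonneg hd, hbabs, haabs]
    exact ⟨rfl, by nlinarith⟩

/-- Conformal circuit decomposition. -/
lemma conformal_decomposition {W : Submodule ℝ (ι → ℝ)} :
    ∀ (k : ℕ), ∀ z ∈ W, (fsupp z).card ≤ k →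
    ∃ (m : ℕ) (G : Fin m → ι → ℝ),
      (∀ l, G l ∈ W ∧ G l ≠ 0 ∧ IsCircuit W {i | G l i ≠ 0} ∧ ∀ i, 0 ≤ G l i * z i) ∧
      (∀ i, z i = ∑ l, G l i) ∧ (∀ i, ∑ l, |G l i| = |z i|) := by
  intro k
  induction k with
  | zero =>
    intro z hzW hcard
    have hz0 : z = 0 := by
      by_contra h
      obtain ⟨i, hi⟩ : ∃ i, z i ≠ 0 := by
        by_contra h'; push_neg at h'; exact h (funext h')
      have : i ∈ fsupp z := mem_fsupp.mpr hi
      have := Finset.card_pos.mpr ⟨i, this⟩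
      omega
    exact ⟨0, ![], by simp, by simp [hz0], by simp [hz0]⟩
  | succ k ih =>
    intro z hzW hcard
    by_cases hz0 : z = 0
    · exact ⟨0, ![], by simp, by simp [hz0], by simp [hz0]⟩
    obtain ⟨g, hgW, hg0, hgsc, hgsupp, hgcirc⟩ := exists_conformal_circuit hzW hz0
    have hSne : (fsupp g).Nonempty := by
      obtain ⟨i, hi⟩ : ∃ i, g i ≠ 0 := by
        by_contra h'; push_neg at h'; exact hg0 (funext h')
      exact ⟨i, mem_fsupp.mpr hi⟩
    obtain ⟨i₀, hi₀, hi₀min⟩ := (fsupp g).exists_min_image (fun i => |z i| / |g i|) hSne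
    have hgi₀ : g i₀ ≠ 0 := mem_fsupp.mp hi₀
    have hzi₀ : z i₀ ≠ 0 := fun h => hgi₀ (hgsupp i₀ h)
    set α : ℝ := |z i₀| / |g i₀| with hα
    have hαpos : 0 < α := div_pos (abs_pos.mpr hzi₀) (abs_pos.mpr hgi₀)
    have hαle : ∀ i, g i ≠ 0 → α * |g i| ≤ |z i| := by
      intro i hi
      have h1 := hi₀min i (mem_fsupp.mpr hi)
      have h2 : (0:ℝ) < |g i| := abs_pos.mpr hi
      calc α * |g i| ≤ (|z i| / |g i|) * |g i| := by
            exact mul_le_mul_of_nonneg_right h1 (abs_nonneg _)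
        _ = |z i| := div_mul_cancel₀ _ h2.ne'
    set z' : ι → ℝ := z - α • g with hz'
    have hz'W : z' ∈ W := W.sub_mem hzW (W.smul_mem α hgW)
    have hkey : ∀ i, |z' i| = |z i| - α * |g i| ∧ 0 ≤ z' i * z i := by
      intro i
      by_cases hgi : g i = 0
      · simp [hz', hgi, mul_self_nonneg]
      · have := abs_sub_smul_helper (hgsc i) hgi hαpos (hαle i hgi)
        simpa [hz'] using this
    have hz'i₀ : z' i₀ = 0 := by
      have h1 := (hkey i₀).1
      have h2 : α * |g i₀| = |z i₀| := div_mul_cancel₀ _ (abs_pos.mpr hgi₀).ne'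
      rw [h2] at h1
      simpa using abs_eq_zero.mp (by linarith [abs_nonneg (z' i₀)])
    have hsub : fsupp z' ⊆ (fsupp z).erase i₀ := by
      intro i hi
      have hi' : z' i ≠ 0 := mem_fsupp.mp hi
      refine Finset.mem_erase.mpr ⟨fun h => hi' (h ▸ hz'i₀), mem_fsupp.mpr fun hzi => ?_⟩
      have h1 := (hkey i).1
      have h2 : α * |g i| ≤ 0 := by
        rw [hzi] at h1
        simp only [abs_zero, zero_sub] at h1
        linarith [abs_nonneg (z' i)]
      have h3 : g i = 0 := by
        by_contra h
        have := mul_pos hαpos (abs_pos.mpr h)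
        linarith
      apply hi'
      simp [hz', hzi, h3]
    have hcard' : (fsupp z').card ≤ k := by
      have h1 := Finset.card_le_card hsub
      have h2 := Finset.card_erase_lt_of_mem (mem_fsupp.mpr hzi₀)
      omega
    obtain ⟨m, G', hG'props, hG'sum, hG'abs⟩ := ih z' hz'W hcard'
    refine ⟨m + 1, Fin.cons (α • g) G', ?_, ?_, ?_⟩
    · intro l
      refine Fin.cases ?_ ?_ l
      · refine ⟨W.smul_mem α hgW, smul_ne_zero hαpos.ne' hg0, ?_, ?_⟩
        · have : {i | (α • g) i ≠ 0} = {i | g i ≠ 0} := by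
            ext i; simp [hαpos.ne']
          rw [Fin.cons_zero, this]
          exact hgcirc
        · intro i
          simp only [Fin.cons_zero, Pi.smul_apply, smul_eq_mul]
          have := hgsc i
          nlinarith
      · intro l'
        obtain ⟨h1, h2, h3, h4⟩ := hG'props l'
        refine ⟨h1, h2, by rw [Fin.cons_succ]; exact h3, ?_⟩
        intro i
        rw [Fin.cons_succ]
        by_cases hz'i : z' i = 0
        · have : G' l' i = 0 := by
            have hs := hG'abs i
            rw [hz'i, abs_zero] at hs
            have := (Finset.sum_eq_zero_iff_of_nonneg (fun l _ => abs_nonneg (G' l i))).mp hs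
              l' (Finset.mem_univ l')
            exact abs_eq_zero.mp this
          rw [this, zero_mul]
        · have hzi : z i ≠ 0 := by
            intro h
            have h1' := (hkey i).1
            rw [h] at h1'
            simp at h1'
            have := abs_nonneg (z' i)
            have := mul_nonneg hαpos.le (abs_nonneg (g i))
            exact hz'i (abs_eq_zero.mp (le_antisymm (by linarith) (abs_nonneg _)))
          have hzz' : 0 < z' i * z i :=
            lt_of_le_of_ne (hkey i).2 (Ne.symm (mul_ne_zero hz'i hzi))
          have h5 := h4 i
          nlinarith [sq_nonneg (z i), mul_nonneg h5 (sq_nonneg (z i))]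
    · intro i
      rw [Fin.sum_univ_succ]
      simp only [Fin.cons_zero, Fin.cons_succ, Pi.smul_apply, smul_eq_mul]
      have := hG'sum i
      have hz'idef : z' i = z i - α * g i := by simp [hz']
      linarith [this, hz'idef]
    · intro i
      rw [Fin.sum_univ_succ]
      simp only [Fin.cons_zero, Fin.cons_succ]
      rw [hG'abs i, (hkey i).1]
      simp only [Pi.smul_apply, smul_eq_mul, abs_mul, abs_of_pos hαpos]
      ring

end Aux3

section Aux4

open Module

variable {ι : Type*} [Fintype ι] [DecidableEq ι]

/-- The set over which `kappa` takes the supremum. -/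
def kappaSet (W : Submodule ℝ (ι → ℝ)) : Set ℝ :=
  {1} ∪ {r | ∃ C : Set ι, IsCircuit W C ∧ ∃ g ∈ W, g ≠ 0 ∧ {i | g i ≠ 0} = C ∧
    r = sSup ((fun i => |g i|) '' C) / sInf ((fun i => |g i|) '' C)}

lemma kappa_eq_sSup_kappaSet (W : Submodule ℝ (ι → ℝ)) : kappa W = sSup (kappaSet W) := rfl

lemma kappaSet_finite (W : Submodule ℝ (ι → ℝ)) : (kappaSet W).Finite := by
  classical
  set F : Set ι → ℝ := fun C =>
    if h : ∃ g, g ∈ W ∧ g ≠ 0 ∧ {i | g i ≠ 0} = C then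
      sSup ((fun i => |h.choose i|) '' C) / sInf ((fun i => |h.choose i|) '' C)
    else 0 with hF
  have hsub : kappaSet W ⊆ insert 1 (Set.range F) := by
    rintro r (h1 | ⟨C, hcirc, g, hgW, hg0, hgC, rfl⟩)
    · exact Or.inl h1
    · right
      refine ⟨C, ?_⟩
      have h : ∃ g, g ∈ W ∧ g ≠ 0 ∧ {i | g i ≠ 0} = C := ⟨g, hgW, hg0, hgC⟩
      rw [hF]
      simp only [dif_pos h]
      exact circuit_ratio_eq hcirc.1 hgW hg0 hgC h.choose_spec.1 h.choose_spec.2.1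
        h.choose_spec.2.2
  exact Set.Finite.subset (Set.Finite.insert 1 (Set.finite_range F)) hsub

lemma kappaSet_nonempty (W : Submodule ℝ (ι → ℝ)) : (kappaSet W).Nonempty :=
  ⟨1, Or.inl rfl⟩

lemma kappa_mem_kappaSet (W : Submodule ℝ (ι → ℝ)) : kappa W ∈ kappaSet W := by
  rw [kappa_eq_sSup_kappaSet]
  exact (kappaSet_nonempty W).csSup_mem (kappaSet_finite W)

lemma le_kappa {W : Submodule ℝ (ι → ℝ)} {r : ℝ} (hr : r ∈ kappaSet W) : r ≤ kappa W :=
  le_csSup (kappaSet_finite W).bddAbove hr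

lemma one_le_kappa (W : Submodule ℝ (ι → ℝ)) : 1 ≤ kappa W :=
  le_kappa (Or.inl rfl)

lemma ratio_ge_one {g : ι → ℝ} {C : Set ι} (hg0 : g ≠ 0) (hgC : {i | g i ≠ 0} = C) :
    1 ≤ sSup ((fun i => |g i|) '' C) / sInf ((fun i => |g i|) '' C) := by
  have hCne : C.Nonempty := by
    obtain ⟨i, hi⟩ : ∃ i, g i ≠ 0 := by
      by_contra h'; push_neg at h'; exact hg0 (funext h')
    exact ⟨i, hgC ▸ hi⟩
  obtain ⟨iM, hiM, hMub, hMeq⟩ := exists_max_abs g hCne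
  obtain ⟨im, him, hmlb, hmeq⟩ := exists_min_abs g hCne
  have hm : (0:ℝ) < |g im| := abs_pos.mpr (by rw [← hgC] at him; exact him)
  rw [hMeq, hmeq]
  exact (one_le_div hm).mpr (hmlb iM hiM)

lemma coordSubspace_mono {C₁ C₂ : Set ι} (h : C₁ ⊆ C₂) : coordSubspace C₁ ≤ coordSubspace C₂ :=
  fun x hx i hi => hx i fun hc => hi (h hc)

end Aux4


open Module in
/-- for `W ≠ {0}`, `κ_W` is the maximum of `‖L_I^W(p)‖_∞ / ‖p‖₁`
over nonempty `I` and nonzero `p ∈ π_I(W)`. -/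
theorem kappa_eq_max_lift_ratio {n : ℕ} (W : Submodule ℝ (Fin n → ℝ)) (hW : W ≠ ⊥) :
    IsGreatest
      {r | ∃ (I : Finset (Fin n)) (p z : Fin n → ℝ), I.Nonempty ∧ IsMinLift W I p z ∧
        (∃ i ∈ I, p i ≠ 0) ∧ r = normInf z / ∑ i ∈ I, |p i|}
      (kappa W) := by
  classical
  obtain ⟨z₀, hz₀W, hz₀⟩ := (Submodule.ne_bot_iff W).mp hW
  obtain ⟨g₀, hg₀W, hg₀0, hg₀sc, hg₀supp, hg₀circ⟩ := exists_conformal_circuit hz₀W hz₀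
  constructor
  · -- kappa W is attained by some circuit
    obtain ⟨C, gg, hcirc, hggW, hgg0, hggC, hggr⟩ :
        ∃ C gg, IsCircuit W C ∧ gg ∈ W ∧ gg ≠ 0 ∧ {i | gg i ≠ 0} = C ∧
          sSup ((fun i => |gg i|) '' C) / sInf ((fun i => |gg i|) '' C) = kappa W := by
      rcases kappa_mem_kappaSet W with h1 | ⟨C, hcirc, g, hgW, hg0, hgC, hr⟩
      · refine ⟨{i | g₀ i ≠ 0}, g₀, hg₀circ, hg₀W, hg₀0, rfl, ?_⟩
        have hset : sSup ((fun i => |g₀ i|) '' {i | g₀ i ≠ 0}) /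
            sInf ((fun i => |g₀ i|) '' {i | g₀ i ≠ 0}) ∈ kappaSet W :=
          Or.inr ⟨{i | g₀ i ≠ 0}, hg₀circ, g₀, hg₀W, hg₀0, rfl, rfl⟩
        have h2 := le_kappa hset
        have h3 := ratio_ge_one hg₀0 rfl
        rw [h1] at h2 ⊢
        linarith
      · exact ⟨C, g, hcirc, hgW, hg0, hgC, hr.symm⟩
    have hCne : C.Nonempty := by
      obtain ⟨i, hi⟩ : ∃ i, gg i ≠ 0 := by
        by_contra h'; push_neg at h'; exact hgg0 (funext h')
      exact ⟨i, hggC ▸ hi⟩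
    obtain ⟨iM, hiM, hMub, hMeq⟩ := exists_max_abs gg hCne
    obtain ⟨im, him, hmlb, hmeq⟩ := exists_min_abs gg hCne
    have hggim : gg im ≠ 0 := by rw [← hggC] at him; exact him
    set I : Finset (Fin n) := (fsupp gg)ᶜ ∪ {im} with hI
    have himI : im ∈ I := Finset.mem_union_right _ (Finset.mem_singleton_self im)
    refine ⟨I, gg, gg, ⟨im, himI⟩, ⟨hggW, fun i _ => rfl, ?_⟩, ⟨im, himI, hggim⟩, ?_⟩
    · -- minimality of the lift: gg is the unique lift
      intro z' hz'W hz'I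
      have hd : z' - gg ∈ W ⊓ coordSubspace (C \ {im}) := by
        refine ⟨W.sub_mem hz'W hggW, fun i hi => ?_⟩
        simp only [Set.mem_diff, Set.mem_singleton_iff, not_and, not_not] at hi
        by_cases hiC : i ∈ C
        · have heq : i = im := hi hiC
          subst heq
          simp [hz'I i himI]
        · have hggi : gg i = 0 := by
            by_contra h; exact hiC (hggC ▸ h)
          have hiI : i ∈ I := Finset.mem_union_left _
            (Finset.mem_compl.mpr (fun h => (mem_fsupp.mp h) hggi))
          simp [hz'I i hiI]
      have hP0 : W ⊓ coordSubspace (C \ {im}) = ⊥ := by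
        have hlt : C \ {im} ⊂ C := by
          constructor
          · exact Set.diff_subset
          · intro h
            exact (h him).2 rfl
        have hne1 := hcirc.2 _ hlt
        have hle : finrank ℝ ↥(W ⊓ coordSubspace (C \ {im})) ≤ 1 := by
          have hmono : W ⊓ coordSubspace (C \ {im}) ≤ W ⊓ coordSubspace C :=
            inf_le_inf_left W (coordSubspace_mono Set.diff_subset)
          calc finrank ℝ ↥(W ⊓ coordSubspace (C \ {im}))
              ≤ finrank ℝ ↥(W ⊓ coordSubspace C) := Submodule.finrank_mono hmono
            _ = 1 := hcirc.1
        rw [← Submodule.finrank_eq_zero]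
        omega
      rw [hP0] at hd
      have : z' = gg := by
        have := Submodule.mem_bot ℝ |>.mp hd
        rwa [sub_eq_zero] at this
      rw [this]
    · -- the value equals kappa W
      have hsum : ∑ i ∈ I, |gg i| = |gg im| := by
        apply Finset.sum_eq_single_of_mem im himI
        intro j hj hne
        rcases Finset.mem_union.mp hj with h | h
        · rw [abs_eq_zero]
          by_contra hggj
          exact Finset.mem_compl.mp h (mem_fsupp.mpr hggj)
        · exact absurd (Finset.mem_singleton.mp h) hne
      have : Nonempty (Fin n) := ⟨im⟩
      have hinf : normInf gg = |gg iM| := by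
        apply le_antisymm
        · apply ciSup_le
          intro j
          by_cases hj : gg j = 0
          · rw [hj, abs_zero]; exact abs_nonneg _
          · exact hMub j (hggC ▸ hj)
        · exact le_ciSup (f := fun i => |gg i|) (Finite.bddAbove_range _) iM
      rw [hinf, hsum, ← hggr, hMeq, hmeq]
  · -- upper bound
    rintro r ⟨I, p, z, hIne, hlift, ⟨i₁, hi₁I, hp₁⟩, rfl⟩
    have hzp := hlift.2.1
    have hsum_eq : ∑ i ∈ I, |p i| = ∑ i ∈ I, |z i| :=
      Finset.sum_congr rfl fun i hi => by rw [hzp i hi]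
    have hsum_pos : 0 < ∑ i ∈ I, |p i| :=
      Finset.sum_pos' (fun i _ => abs_nonneg _) ⟨i₁, hi₁I, abs_pos.mpr hp₁⟩
    have hone := one_le_kappa W
    rw [div_le_iff₀ hsum_pos]
    by_cases hz0 : z = 0
    · have : normInf z = 0 := by
        have : Nonempty (Fin n) := ⟨i₁⟩
        simp [normInf, hz0]
      rw [this]
      exact mul_nonneg (by linarith) (Finset.sum_nonneg fun i _ => abs_nonneg _)
    obtain ⟨m, G, hGprops, hGsum, hGabs⟩ :=
      conformal_decomposition (fsupp z).card z hlift.1 le_rfl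
    have hGI : ∀ l, ∃ i ∈ I, G l i ≠ 0 := by
      intro l
      by_contra h
      push_neg at h
      have horth := minLift_orth hlift (hGprops l).1 h
      have hper : ∀ i, (G l i) ^ 2 ≤ z i * G l i := by
        intro i
        have h1 : 0 ≤ G l i * z i := (hGprops l).2.2.2 i
        have h2 : |G l i| ≤ |z i| := by
          rw [← hGabs i]
          exact Finset.single_le_sum (f := fun l' => |G l' i|) (fun l' _ => abs_nonneg _)
            (Finset.mem_univ l)
        calc (G l i) ^ 2 = |G l i| * |G l i| := by rw [sq, ← abs_mul_abs_self]
          _ ≤ |z i| * |G l i| := mul_le_mul_of_nonneg_right h2 (abs_nonneg _)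
          _ = |z i * G l i| := (abs_mul _ _).symm
          _ = z i * G l i := abs_of_nonneg (by linarith [h1])
      have hsq : ∑ i, (G l i) ^ 2 ≤ 0 := by
        calc ∑ i, (G l i) ^ 2 ≤ ∑ i, z i * G l i := Finset.sum_le_sum fun i _ => hper i
          _ = 0 := horth
      have hG0 : G l = 0 := by
        funext i
        have h1 : (G l i) ^ 2 = 0 := by
          have h2 := Finset.single_le_sum (fun i (_ : i ∈ Finset.univ) => sq_nonneg (G l i))
            (Finset.mem_univ i)
          have h3 := sq_nonneg (G l i)
          linarith
        exact pow_eq_zero_iff (n := 2) (by norm_num) |>.mp h1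
      exact (hGprops l).2.1 hG0
    choose iG hiGI hiG0 using hGI
    have hper_piece : ∀ l j, |G l j| ≤ kappa W * |G l (iG l)| := by
      intro l j
      set Cl : Set (Fin n) := {i | G l i ≠ 0} with hCl
      have hClne : Cl.Nonempty := ⟨iG l, hiG0 l⟩
      obtain ⟨jM, hjM, hMub, hMeq⟩ := exists_max_abs (G l) hClne
      obtain ⟨jm, hjm, hmlb, hmeq⟩ := exists_min_abs (G l) hClne
      have hratio : sSup ((fun i => |G l i|) '' Cl) / sInf ((fun i => |G l i|) '' Cl)
          ≤ kappa W :=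
        le_kappa (Or.inr ⟨Cl, (hGprops l).2.2.1, G l, (hGprops l).1, (hGprops l).2.1, rfl, rfl⟩)
      rw [hMeq, hmeq] at hratio
      have hjmpos : (0:ℝ) < |G l jm| := abs_pos.mpr hjm
      have hMlek : |G l jM| ≤ kappa W * |G l jm| := (div_le_iff₀ hjmpos).mp hratio
      have h1 : |G l j| ≤ |G l jM| := by
        by_cases hj : G l j = 0
        · rw [hj, abs_zero]; exact abs_nonneg _
        · exact hMub j hj
      have h2 : |G l jm| ≤ |G l (iG l)| := hmlb (iG l) (hiG0 l)
      calc |G l j| ≤ |G l jM| := h1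
        _ ≤ kappa W * |G l jm| := hMlek
        _ ≤ kappa W * |G l (iG l)| := mul_le_mul_of_nonneg_left h2 (by linarith)
    have hbound : ∀ j, |z j| ≤ kappa W * ∑ i ∈ I, |z i| := by
      intro j
      calc |z j| = ∑ l, |G l j| := (hGabs j).symm
        _ ≤ ∑ l, kappa W * |G l (iG l)| := Finset.sum_le_sum fun l _ => hper_piece l j
        _ ≤ ∑ l, kappa W * ∑ i ∈ I, |G l i| := by
            refine Finset.sum_le_sum fun l _ => ?_
            exact mul_le_mul_of_nonneg_left
              (Finset.single_le_sum (f := fun i => |G l i|) (fun i _ => abs_nonneg _) (hiGI l))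
              (by linarith)
        _ = kappa W * ∑ i ∈ I, ∑ l, |G l i| := by rw [← Finset.mul_sum, Finset.sum_comm]
        _ = kappa W * ∑ i ∈ I, |z i| := by
            rw [Finset.sum_congr rfl fun i _ => hGabs i]
    rw [hsum_eq]
    have : Nonempty (Fin n) := ⟨i₁⟩
    exact ciSup_le hbound
end

section
/- For a linear subspace W ⊆ ℝ^n with {0} ≠ W ≠ ℝ^n: κ_W = κ_{W^⊥} and χ̄_W = χ̄_{W^⊥}, where W^⊥ is the orthogonal complement of W and χ̄_V := max{‖L_I^V‖ : ∅ ≠ I ⊆ {1,…,n}} for a subspace V ⊆ ℝ^n, ‖L_I^V‖ being the ℓ₂→ℓ₂ operator norm of the lifting map on π_I(V). -/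
open scoped BigOperators

variable {ι : Type*} [Fintype ι] [DecidableEq ι]

/-!
If `g` is a circuit vector of `W` and `i ≠ j` lie in its support `C`, then `W` contains no
vector supported in `C \ {j}` with nonzero `i`-th entry, so a vector of `W^⊥` separates `e_i`
from `W + ℝ^{C \ {i, j}}`; a circuit vector `h` of `W^⊥` below its support meets `g` only in
`i` and `j`, whence `g_i h_i + g_j h_j = 0` and `|g_i| / |g_j| = |h_j| / |h_i| ≤ κ_{W^⊥}`.
Since `W^⊥⊥ = W`, this gives `κ_W = κ_{W^⊥}`.

The minimum-norm lifts for `I` are exactly the vectors of `W` orthogonal to `W ∩ ℝ^{Iᶜ}`, so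
`‖L_I^W‖` is the maximum of `‖z‖ / ‖z_I‖` over that subspace. At a maximiser `z` the first-order
condition says that `y = ‖z_{Iᶜ}‖² z_I - ‖z_I‖² z_{Iᶜ}` is orthogonal to `W`; then `y` is a
minimum-norm lift for `W^⊥` and `Iᶜ` with `‖y‖ / ‖y_{Iᶜ}‖ = ‖z‖ / ‖z_I‖`. If `z_{Iᶜ} = 0` the
ratio is `1`, and `χ̄_V ≥ 1` for every `V ≠ 0`.
-/

open Function Matrix

section OrthComp

variable {ι : Type*} [Fintype ι] {V U : Submodule ℝ (ι → ℝ)}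

theorem mem_orthComp {y : ι → ℝ} : y ∈ orthComp V ↔ ∀ x ∈ V, x ⬝ᵥ y = 0 := Iff.rfl

theorem comap_toLp_orthComp :
    (orthComp V).comap (WithLp.linearEquiv 2 ℝ (ι → ℝ)).toLinearMap
      = (V.comap (WithLp.linearEquiv 2 ℝ (ι → ℝ)).toLinearMap)ᗮ := by
  ext y
  simp only [Submodule.mem_comap, Submodule.mem_orthogonal, mem_orthComp]
  refine ⟨fun h x hx => ?_, fun h x hx => ?_⟩
  · simpa [EuclideanSpace.inner_eq_star_dotProduct, dotProduct_comm] using h _ hx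
  · simpa [EuclideanSpace.inner_eq_star_dotProduct, dotProduct_comm] using h (WithLp.toLp 2 x) hx

theorem orthComp_orthComp : orthComp (orthComp V) = V :=
  Submodule.comap_injective_of_surjective (LinearEquiv.surjective _) <| by
    rw [comap_toLp_orthComp, comap_toLp_orthComp, Submodule.orthogonal_orthogonal]

theorem sup_inf_orthComp (h : U ≤ V) : U ⊔ V ⊓ orthComp U = V := by
  apply (Submodule.orderIsoMapComap (WithLp.linearEquiv 2 ℝ (ι → ℝ))).symm.injective
  simp only [OrderIso.map_sup, OrderIso.map_inf, Submodule.orderIsoMapComap_symm_apply,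
    comap_toLp_orthComp]
  rw [inf_comm]
  exact Submodule.sup_orthogonal_inf_of_hasOrthogonalProjection (Submodule.comap_mono h)

theorem orthComp_bot : orthComp (⊥ : Submodule ℝ (ι → ℝ)) = ⊤ :=
  eq_top_iff.2 fun y _ x hx => by simp [(Submodule.mem_bot ℝ).1 hx]

theorem orthComp_ne_bot (h : V ≠ ⊤) : orthComp V ≠ ⊥ := fun hV =>
  h (by rw [← orthComp_orthComp (V := V), hV, orthComp_bot])

end OrthComp

section Circuit

variable {ι : Type*}

theorem mem_coordSubspace_iff {C : Set ι} {x : ι → ℝ} : x ∈ coordSubspace C ↔ support x ⊆ C :=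
  support_subset_iff'.symm

theorem support_sub_div_smul_subset {S : Set ι} {v w : ι → ℝ} {k : ι} (hv : support v ⊆ S)
    (hw : support w ⊆ S) (hk : w k ≠ 0) : support (v - (v k / w k) • w) ⊆ S \ {k} := by
  refine Set.subset_sdiff_singleton ((support_sub _ _).trans ?_) (by simp [hk])
  exact Set.union_subset hv ((support_smul_subset_right _ _).trans hw)

variable {V : Submodule ℝ (ι → ℝ)}

theorem IsCircuit.exists_smul_eq {C : Set ι} (hC : IsCircuit V C) {g h : ι → ℝ} (hg : g ∈ V)
    (hgC : support g ⊆ C) (hg0 : g ≠ 0) (hh : h ∈ V) (hhC : support h ⊆ C) :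
    ∃ c : ℝ, c • g = h := by
  obtain ⟨c, hc⟩ := (finrank_eq_one_iff_of_nonzero' (⟨g, hg, mem_coordSubspace_iff.2 hgC⟩ :
    ↥(V ⊓ coordSubspace C)) fun h => hg0 (congrArg Subtype.val h)).1 hC.1
    ⟨h, hh, mem_coordSubspace_iff.2 hhC⟩
  exact ⟨c, congrArg Subtype.val hc⟩

theorem isCircuit_support_of_minimal_s6 {h : ι → ℝ} (hh : h ∈ V) (h0 : h ≠ 0)
    (hmin : ∀ u ∈ V, u ≠ 0 → support u ⊆ support h → support u = support h) :
    IsCircuit V (support h) := by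
  refine ⟨?_, fun C' hC' => ?_⟩
  · obtain ⟨k, hk⟩ := support_nonempty_iff.2 h0
    refine (finrank_eq_one_iff_of_nonzero' (⟨h, hh, mem_coordSubspace_iff.2 subset_rfl⟩ :
      ↥(V ⊓ coordSubspace (support h))) fun h => h0 (congrArg Subtype.val h)).2
      fun ⟨u, hu, huh⟩ => ?_
    have hsub := support_sub_div_smul_subset (mem_coordSubspace_iff.1 huh) subset_rfl hk
    have hzero : u - (u k / h k) • h = 0 := by
      by_contra hne
      rw [hmin _ (V.sub_mem hu (V.smul_mem _ hh)) hne (hsub.trans Set.sdiff_subset)] at hsub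
      exact (hsub hk).2 rfl
    exact ⟨u k / h k, Subtype.ext (sub_eq_zero.1 hzero).symm⟩
  · have hbot : V ⊓ coordSubspace C' = ⊥ := by
      refine (Submodule.eq_bot_iff _).2 fun u ⟨hu, huC'⟩ => by_contra fun hu0 => ?_
      have huC' := mem_coordSubspace_iff.1 huC'
      exact hC'.not_subset (hmin u hu hu0 (huC'.trans hC'.subset) ▸ huC')
    rw [hbot, finrank_bot]
    exact zero_ne_one

variable [Finite ι]

theorem IsCircuit.eq_zero_of_support_ssubset {C : Set ι} (hC : IsCircuit V C) {w : ι → ℝ}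
    (hw : w ∈ V) (hwC : support w ⊂ C) : w = 0 := by
  have hle : Module.finrank ℝ ↥(V ⊓ coordSubspace (support w)) ≤ 1 :=
    hC.1 ▸ Submodule.finrank_mono
      (inf_le_inf_left V fun x hx => mem_coordSubspace_iff.2
        ((mem_coordSubspace_iff.1 hx).trans hwC.subset))
  have hbot : V ⊓ coordSubspace (support w) = ⊥ :=
    Submodule.finrank_eq_zero.1 (by have := hC.2 _ hwC; omega)
  have hmem : w ∈ V ⊓ coordSubspace (support w) := ⟨hw, mem_coordSubspace_iff.2 subset_rfl⟩
  rwa [hbot, Submodule.mem_bot] at hmem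

theorem exists_isCircuit_support_subset {y : ι → ℝ} (hy : y ∈ V) {i : ι} (hi : y i ≠ 0) :
    ∃ h ∈ V, h i ≠ 0 ∧ support h ⊆ support y ∧ IsCircuit V (support h) := by
  obtain ⟨h, ⟨hV, hhi, hhy⟩, hmin⟩ := exists_minimalFor_of_wellFoundedLT
    (fun h => h ∈ V ∧ h i ≠ 0 ∧ support h ⊆ support y) support ⟨y, hy, hi, subset_rfl⟩
  refine ⟨h, hV, hhi, hhy, isCircuit_support_of_minimal_s6 hV (ne_of_apply_ne (· i) hhi)
    fun u hu hu0 huh => by_contra fun hne => ?_⟩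
  obtain ⟨v, hv, hvi, hvh⟩ : ∃ v ∈ V, v i ≠ 0 ∧ support v ⊂ support h := by
    by_cases hui : u i = 0
    · obtain ⟨k, hk⟩ := support_nonempty_iff.2 hu0
      refine ⟨h - (h k / u k) • u, V.sub_mem hV (V.smul_mem _ hu), by simp [hui, hhi], ?_⟩
      exact (support_sub_div_smul_subset subset_rfl huh hk).trans_ssubset
        (Set.sdiff_singleton_ssubset.2 (huh hk))
    · exact ⟨u, hu, hui, huh.ssubset_of_ne hne⟩
  exact hvh.not_subset (hmin ⟨hv, hvi, hvh.subset.trans hhy⟩ hvh.subset)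

end Circuit

section Imbalance

variable {ι : Type*}

noncomputable def imbalance (g : ι → ℝ) : ℝ :=
  sSup ((fun i => |g i|) '' support g) / sInf ((fun i => |g i|) '' support g)

variable [Finite ι] {g : ι → ℝ} {K : ℝ}

theorem exists_imbalance_eq (hg : g ≠ 0) :
    ∃ i j, g i ≠ 0 ∧ g j ≠ 0 ∧ imbalance g = |g i| / |g j| := by
  have hne := (support_nonempty_iff.2 hg).image fun i => |g i|
  have hfin := (Set.toFinite (support g)).image fun i => |g i|
  obtain ⟨i, hi, hsup⟩ := hne.csSup_mem hfin
  obtain ⟨j, hj, hinf⟩ := hne.csInf_mem hfin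
  exact ⟨i, j, hi, hj, by rw [imbalance, ← hsup, ← hinf]⟩

theorem imbalance_le (hg : g ≠ 0) (h : ∀ i j, g i ≠ 0 → g j ≠ 0 → |g i| ≤ K * |g j|) :
    imbalance g ≤ K := by
  obtain ⟨i, j, hi, hj, heq⟩ := exists_imbalance_eq hg
  rw [heq, div_le_iff₀ (abs_pos.2 hj)]
  exact h i j hi hj

theorem abs_le_imbalance_mul_abs {i j : ι} (hi : g i ≠ 0) (hj : g j ≠ 0) :
    |g i| ≤ imbalance g * |g j| := by
  set s := (fun i => |g i|) '' support g
  have hfin : s.Finite := (Set.toFinite _).image _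
  obtain ⟨k, hk, hinf⟩ := (Set.image_nonempty.2 ⟨j, hj⟩).csInf_mem hfin
  have hpos : 0 < sInf s := hinf ▸ abs_pos.2 hk
  calc |g i| ≤ sSup s := le_csSup hfin.bddAbove ⟨i, hi, rfl⟩
    _ = imbalance g * sInf s := (div_mul_cancel₀ _ hpos.ne').symm
    _ ≤ imbalance g * |g j| :=
      mul_le_mul_of_nonneg_left (csInf_le hfin.bddBelow ⟨j, hj, rfl⟩)
        (div_nonneg (Real.sSup_nonneg (by simp)) hpos.le)

theorem imbalance_smul_le {c : ℝ} (hg : c • g ≠ 0) : imbalance (c • g) ≤ imbalance g :=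
  imbalance_le hg fun i j hi hj => by
    simp only [Pi.smul_apply, smul_eq_mul, abs_mul, ne_eq, mul_eq_zero, not_or] at hi hj ⊢
    rw [mul_left_comm]
    exact mul_le_mul_of_nonneg_left (abs_le_imbalance_mul_abs hi.2 hj.2) (abs_nonneg c)

theorem imbalance_smul {c : ℝ} (hc : c ≠ 0) (hg : g ≠ 0) : imbalance (c • g) = imbalance g := by
  refine (imbalance_smul_le (smul_ne_zero hc hg)).antisymm ?_
  simpa [inv_smul_smul₀ hc] using imbalance_smul_le (c := c⁻¹) (g := c • g) (by simpa [hc] using hg)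

end Imbalance

section Kappa

variable {ι : Type*} {V : Submodule ℝ (ι → ℝ)}

theorem kappa_eq_sSup : kappa V =
    sSup (insert 1 (imbalance '' {g | g ∈ V ∧ g ≠ 0 ∧ IsCircuit V (support g)})) := by
  rw [kappa, Set.singleton_union]
  congr 2
  ext r
  constructor
  · rintro ⟨_, hC, g, hg, hg0, rfl, rfl⟩
    exact ⟨g, ⟨hg, hg0, hC⟩, rfl⟩
  · rintro ⟨g, ⟨hg, hg0, hC⟩, rfl⟩
    exact ⟨_, hC, g, hg, hg0, rfl, rfl⟩

theorem kappa_le {K : ℝ} (hK : 1 ≤ K)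
    (h : ∀ g ∈ V, g ≠ 0 → IsCircuit V (support g) → imbalance g ≤ K) : kappa V ≤ K := by
  rw [kappa_eq_sSup]
  refine csSup_le (Set.insert_nonempty _ _) ?_
  rintro _ (rfl | ⟨g, ⟨hg, hg0, hC⟩, rfl⟩)
  exacts [hK, h g hg hg0 hC]

variable [Finite ι]

theorem finite_imbalance_circuits :
    (imbalance '' {g | g ∈ V ∧ g ≠ 0 ∧ IsCircuit V (support g)}).Finite := by
  have hsub : ∀ C : Set ι,
      (imbalance '' {g | g ∈ V ∧ g ≠ 0 ∧ IsCircuit V C ∧ support g = C}).Subsingleton := by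
    rintro C _ ⟨g, ⟨hg, hg0, hC, rfl⟩, rfl⟩ _ ⟨h, ⟨hh, hh0, -, hhg⟩, rfl⟩
    obtain ⟨c, rfl⟩ := hC.exists_smul_eq hg subset_rfl hg0 hh hhg.subset
    exact (imbalance_smul (fun hc => hh0 (by simp [hc])) hg0).symm
  refine (Set.finite_iUnion fun C => (hsub C).finite).subset ?_
  rintro _ ⟨g, ⟨hg, hg0, hC⟩, rfl⟩
  exact Set.mem_iUnion.2 ⟨support g, g, ⟨hg, hg0, hC, rfl⟩, rfl⟩

theorem imbalance_le_kappa {g : ι → ℝ} (hg : g ∈ V) (hg0 : g ≠ 0) (hC : IsCircuit V (support g)) :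
    imbalance g ≤ kappa V := by
  rw [kappa_eq_sSup]
  exact le_csSup (finite_imbalance_circuits.insert 1).bddAbove
    (Set.mem_insert_of_mem _ ⟨g, ⟨hg, hg0, hC⟩, rfl⟩)

theorem one_le_kappa_s6 : 1 ≤ kappa V := by
  rw [kappa_eq_sSup]
  exact le_csSup (finite_imbalance_circuits.insert 1).bddAbove (Set.mem_insert _ _)

theorem abs_le_kappa_mul_abs {g : ι → ℝ} (hg : g ∈ V) (hC : IsCircuit V (support g)) {i j : ι}
    (hi : g i ≠ 0) (hj : g j ≠ 0) : |g i| ≤ kappa V * |g j| :=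
  (abs_le_imbalance_mul_abs hi hj).trans <| mul_le_mul_of_nonneg_right
    (imbalance_le_kappa hg (ne_of_apply_ne (· i) hi) hC) (abs_nonneg _)

end Kappa
section CircuitDuality

variable {ι : Type*} [Fintype ι] {V : Submodule ℝ (ι → ℝ)}

theorem IsCircuit.exists_orthComp {g : ι → ℝ} (hg : g ∈ V) (hC : IsCircuit V (support g))
    {i j : ι} (hi : g i ≠ 0) (hj : g j ≠ 0) (hij : i ≠ j) :
    ∃ h ∈ orthComp V, IsCircuit (orthComp V) (support h) ∧ h i ≠ 0 ∧ h j ≠ 0 ∧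
      g i * h i + g j * h j = 0 := by
  classical
  set S := V ⊔ coordSubspace (support g \ {i, j})
  have hS : Pi.single i 1 ∉ S := fun hmem => by
    obtain ⟨w, hw, u, hu, hwu⟩ := Submodule.mem_sup.1 hmem
    have hu := mem_coordSubspace_iff.1 hu
    have hwu : w = Pi.single i 1 - u := eq_sub_of_add_eq hwu
    have hsupp : support w ⊆ support g \ {j} := by
      rw [hwu]
      refine (support_sub _ _).trans (Set.union_subset ?_ (hu.trans ?_))
      · exact Pi.support_single_subset.trans (by simpa [hi] using hij)
      · exact Set.sdiff_subset_sdiff_right (by simp)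
    have hui : u i = 0 := notMem_support.1 fun h => (hu h).2 (by simp)
    have := congr_fun (hwu ▸ hC.eq_zero_of_support_ssubset hw
      (hsupp.trans_ssubset (Set.sdiff_singleton_ssubset.2 hj))) i
    simp [hui] at this
  obtain ⟨y, hyS, hyi⟩ : ∃ y ∈ orthComp S, y i ≠ 0 := by
    by_contra! hy
    exact hS (orthComp_orthComp (V := S) ▸ fun y hyS =>
      (show y ⬝ᵥ Pi.single i 1 = 0 by simpa using hy y hyS))
  obtain ⟨h, hh, hhi, hhy, hhC⟩ := exists_isCircuit_support_subset (V := orthComp V)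
    (fun x hx => hyS x ((le_sup_left : V ≤ S) hx)) hyi
  have hgh : ∀ k, k ≠ i ∧ k ≠ j → g k * h k = 0 := fun k ⟨hki, hkj⟩ => by
    by_cases hgk : g k = 0
    · simp [hgk]
    have hyk : Pi.single k 1 ⬝ᵥ y = 0 := hyS _ (Submodule.mem_sup_right (mem_coordSubspace_iff.2
      (Pi.support_single_subset.trans (Set.singleton_subset_iff.2 ⟨hgk, by simp [hki, hkj]⟩))))
    rw [single_dotProduct, one_mul] at hyk
    simp [notMem_support.1 fun hk => hhy hk hyk]
  have hrel : g i * h i + g j * h j = 0 := by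
    rw [← Fintype.sum_eq_add i j hij hgh]
    exact hh g hg
  refine ⟨h, hh, hhC, hhi, fun hhj => ?_, hrel⟩
  simp [hhj, hi, hhi] at hrel

theorem kappa_le_kappa_orthComp : kappa V ≤ kappa (orthComp V) :=
  kappa_le one_le_kappa_s6 fun g hg hg0 hC => imbalance_le hg0 fun i j hi hj => by
    rcases eq_or_ne i j with rfl | hij
    · exact le_mul_of_one_le_left (abs_nonneg _) one_le_kappa_s6
    obtain ⟨h, hh, hhC, hhi, hhj, hrel⟩ := hC.exists_orthComp hg hi hj hij
    refine le_of_mul_le_mul_right ?_ (abs_pos.2 hhi)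
    calc |g i| * |h i| = |g j| * |h j| := by
          rw [← abs_mul, ← abs_mul, eq_neg_of_add_eq_zero_left hrel, abs_neg]
      _ ≤ |g j| * (kappa (orthComp V) * |h i|) :=
          mul_le_mul_of_nonneg_left (abs_le_kappa_mul_abs hh hhC hhj hhi) (abs_nonneg _)
      _ = kappa (orthComp V) * |g j| * |h i| := by ring

theorem kappa_orthComp : kappa (orthComp V) = kappa V :=
  le_antisymm (by simpa only [orthComp_orthComp] using kappa_le_kappa_orthComp (V := orthComp V))
    kappa_le_kappa_orthComp

end CircuitDuality

theorem Submodule.exists_forall_le_of_smul_invariant {E : Type*} [NormedAddCommGroup E]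
    [NormedSpace ℝ E] [FiniteDimensional ℝ E] {U : Submodule ℝ E} (hU : U ≠ ⊥) {f : E → ℝ}
    (hf : ContinuousOn f (U \ {0})) (hsmul : ∀ c : ℝ, 0 < c → ∀ w, f (c • w) = f w) :
    ∃ z ∈ U, z ≠ 0 ∧ ∀ w ∈ U, w ≠ 0 → f w ≤ f z := by
  have hcompact : IsCompact ((U : Set E) ∩ Metric.sphere 0 1) :=
    (isCompact_sphere 0 1).inter_left U.closed_of_finiteDimensional
  have hunit : ∀ w ∈ U, w ≠ 0 → ‖w‖⁻¹ • w ∈ (U : Set E) ∩ Metric.sphere 0 1 := fun w hw hw0 =>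
    ⟨U.smul_mem _ hw, mem_sphere_zero_iff_norm.2 (norm_smul_inv_norm hw0)⟩
  obtain ⟨w₀, hw₀, hw₀0⟩ := U.ne_bot_iff.1 hU
  obtain ⟨z, ⟨hzU, hz1⟩, hmax⟩ := hcompact.exists_isMaxOn ⟨_, hunit w₀ hw₀ hw₀0⟩
    (hf.mono fun w ⟨hwU, hw1⟩ => ⟨hwU, ne_zero_of_mem_unit_sphere ⟨w, hw1⟩⟩)
  refine ⟨z, hzU, ne_zero_of_mem_unit_sphere ⟨z, hz1⟩, fun w hw hw0 => ?_⟩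
  rw [← hsmul _ (inv_pos.2 (norm_pos_iff.2 hw0))]
  exact hmax (hunit w hw hw0)

section DotProduct

variable {ι : Type*} [Fintype ι]

theorem dotProduct_self_nonneg (v : ι → ℝ) : 0 ≤ v ⬝ᵥ v :=
  Finset.sum_nonneg fun i _ => mul_self_nonneg (v i)

theorem norm2_eq_sqrt_dotProduct (v : ι → ℝ) : norm2 v = √(v ⬝ᵥ v) := by
  simp only [norm2, dotProduct, sq]

theorem dotProduct_add_self_of_dotProduct_eq_zero {x y : ι → ℝ} (h : x ⬝ᵥ y = 0) :
    (x + y) ⬝ᵥ (x + y) = x ⬝ᵥ x + y ⬝ᵥ y := by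
  rw [add_dotProduct, dotProduct_add, dotProduct_add, dotProduct_comm y x, h]
  ring

theorem dotProduct_mul_eq_of_forall_le (U : Submodule ℝ (ι → ℝ)) (P : (ι → ℝ) →ₗ[ℝ] ι → ℝ)
    {z : ι → ℝ} (hz : z ∈ U)
    (hmax : ∀ w ∈ U, (w ⬝ᵥ w) * (P z ⬝ᵥ P z) ≤ (z ⬝ᵥ z) * (P w ⬝ᵥ P w)) {u : ι → ℝ}
    (hu : u ∈ U) : (z ⬝ᵥ u) * (P z ⬝ᵥ P z) = (z ⬝ᵥ z) * (P z ⬝ᵥ P u) := by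
  -- `s ↦ hmax (z + s • u)` is a nonnegative quadratic without constant term.
  have hquad : ∀ s : ℝ, 0 ≤ ((z ⬝ᵥ z) * (P u ⬝ᵥ P u) - (u ⬝ᵥ u) * (P z ⬝ᵥ P z)) * (s * s) +
      2 * ((z ⬝ᵥ z) * (P z ⬝ᵥ P u) - (z ⬝ᵥ u) * (P z ⬝ᵥ P z)) * s + 0 := fun s => by
    have := hmax _ (U.add_mem hz (U.smul_mem s hu))
    simp only [map_add, map_smul, add_dotProduct, dotProduct_add, smul_dotProduct,
      dotProduct_smul, smul_eq_mul, dotProduct_comm u z, dotProduct_comm (P u) (P z)] at this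
    linarith
  have := discrim_le_zero hquad
  rw [discrim, mul_zero, sub_zero] at this
  nlinarith

end DotProduct

section CoordProj

variable {ι : Type*} [DecidableEq ι]

def coordProj (I : Finset ι) : (ι → ℝ) →ₗ[ℝ] ι → ℝ where
  toFun z i := if i ∈ I then z i else 0
  map_add' x y := by ext i; by_cases h : i ∈ I <;> simp [h]
  map_smul' c x := by ext i; by_cases h : i ∈ I <;> simp [h]

variable {I : Finset ι}

@[simp]
theorem coordProj_apply (z : ι → ℝ) (i : ι) : coordProj I z i = if i ∈ I then z i else 0 := rfl

@[simp]
theorem coordProj_coordProj (J : Finset ι) (z : ι → ℝ) :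
    coordProj I (coordProj J z) = coordProj (I ∩ J) z := by
  ext i; by_cases hI : i ∈ I <;> simp [hI]

@[simp]
theorem coordProj_empty : coordProj (∅ : Finset ι) = 0 := by ext; simp

variable [Fintype ι]

@[simp]
theorem coordProj_univ : coordProj (Finset.univ : Finset ι) = LinearMap.id := by
  ext; simp

theorem coordProj_add_coordProj_compl (z : ι → ℝ) : coordProj I z + coordProj Iᶜ z = z := by
  ext i; by_cases hI : i ∈ I <;> simp [hI]

theorem coordProj_dotProduct (x y : ι → ℝ) : coordProj I x ⬝ᵥ y = x ⬝ᵥ coordProj I y := by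
  simp only [dotProduct, coordProj_apply, ite_mul, mul_ite, zero_mul, mul_zero]

theorem coordProj_dotProduct_coordProj (x y : ι → ℝ) :
    coordProj I x ⬝ᵥ coordProj I y = coordProj I x ⬝ᵥ y := by
  rw [coordProj_dotProduct, coordProj_coordProj, Finset.inter_self, ← coordProj_dotProduct]

theorem coordProj_dotProduct_coordProj_compl (x y : ι → ℝ) :
    coordProj I x ⬝ᵥ coordProj Iᶜ y = 0 := by
  rw [coordProj_dotProduct, coordProj_coordProj, Finset.inter_compl, coordProj_empty,
    LinearMap.zero_apply, dotProduct_zero]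

theorem dotProduct_eq_add (z u : ι → ℝ) :
    z ⬝ᵥ u = coordProj I z ⬝ᵥ u + coordProj Iᶜ z ⬝ᵥ u := by
  rw [← add_dotProduct, coordProj_add_coordProj_compl]

theorem dotProduct_self_eq_add (z : ι → ℝ) :
    z ⬝ᵥ z = coordProj I z ⬝ᵥ coordProj I z + coordProj Iᶜ z ⬝ᵥ coordProj Iᶜ z := by
  conv_lhs => rw [← coordProj_add_coordProj_compl (I := I) z]
  exact dotProduct_add_self_of_dotProduct_eq_zero (coordProj_dotProduct_coordProj_compl z z)

theorem sum_sq_eq_coordProj_dotProduct (z : ι → ℝ) :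
    ∑ i ∈ I, z i ^ 2 = coordProj I z ⬝ᵥ coordProj I z := by
  simp [dotProduct, sq, Finset.sum_ite_mem]

end CoordProj

section LiftRange

variable {ι : Type*} {V : Submodule ℝ (ι → ℝ)} {I : Finset ι}

variable (V I) in
def vanishingOn : Submodule ℝ (ι → ℝ) := V ⊓ coordSubspace (↑I)ᶜ

theorem mem_vanishingOn {x : ι → ℝ} : x ∈ vanishingOn V I ↔ x ∈ V ∧ ∀ i ∈ I, x i = 0 := by
  simp only [vanishingOn, Submodule.mem_inf, mem_coordSubspace_iff, support_subset_iff',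
    Set.mem_compl_iff, Finset.mem_coe, not_not]

variable [Fintype ι]

variable (V I) in
def liftRange : Submodule ℝ (ι → ℝ) := V ⊓ orthComp (vanishingOn V I)

theorem vanishingOn_sup_liftRange : vanishingOn V I ⊔ liftRange V I = V :=
  sup_inf_orthComp inf_le_left

variable (I) in
noncomputable def liftRatio (z : ι → ℝ) : ℝ := norm2 z / √(∑ i ∈ I, z i ^ 2)

@[simp]
theorem liftRatio_zero : liftRatio I 0 = 0 := by simp [liftRatio, norm2]

theorem isMinLift_iff {p z : ι → ℝ} :
    IsMinLift V I p z ↔ z ∈ liftRange V I ∧ ∀ i ∈ I, z i = p i := by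
  simp only [IsMinLift, norm2_eq_sqrt_dotProduct,
    Real.sqrt_le_sqrt_iff (dotProduct_self_nonneg _)]
  constructor
  · rintro ⟨hzV, hzp, hmin⟩
    obtain ⟨a, ha, b, hb, rfl⟩ := (Submodule.mem_sup (p := vanishingOn V I)).1
      (by rwa [vanishingOn_sup_liftRange])
    have ha0 := (mem_vanishingOn.1 ha).2
    have hbp : ∀ i ∈ I, b i = p i := fun i hi => by simpa [ha0 i hi] using hzp i hi
    have := hmin b hb.1 hbp
    rw [dotProduct_add_self_of_dotProduct_eq_zero (hb.2 a ha)] at this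
    rw [dotProduct_self_eq_zero.1 (le_antisymm (by linarith) (dotProduct_self_nonneg a)),
      zero_add]
    exact ⟨hb, hbp⟩
  · rintro ⟨hz, hzp⟩
    refine ⟨hz.1, hzp, fun z' hz' hz'p => ?_⟩
    have hd : z' - z ∈ vanishingOn V I :=
      mem_vanishingOn.2 ⟨V.sub_mem hz' hz.1, fun i hi => by simp [hzp i hi, hz'p i hi]⟩
    rw [← add_sub_cancel z z', dotProduct_add_self_of_dotProduct_eq_zero
      ((dotProduct_comm _ _).trans (hz.2 _ hd))]
    linarith [dotProduct_self_nonneg (z' - z)]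

theorem liftOpNorm_eq_sSup : liftOpNorm V I = sSup (liftRatio I '' liftRange V I) := by
  rw [liftOpNorm]
  congr 1
  ext r
  constructor
  · rintro ⟨p, z, hz, rfl⟩
    obtain ⟨hz, hzp⟩ := isMinLift_iff.1 hz
    refine ⟨z, hz, ?_⟩
    rw [liftRatio, Finset.sum_congr rfl fun i hi => by rw [hzp i hi]]
  · rintro ⟨z, hz, rfl⟩
    exact ⟨z, z, isMinLift_iff.2 ⟨hz, fun _ _ => rfl⟩, rfl⟩

theorem liftOpNorm_eq_zero (h : liftRange V I = ⊥) : liftOpNorm V I = 0 := by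
  rw [liftOpNorm_eq_sSup, h, Submodule.bot_coe, Set.image_singleton, csSup_singleton,
    liftRatio_zero]

theorem liftOpNorm_le_chiBar (hI : I.Nonempty) : liftOpNorm V I ≤ chiBar V :=
  le_csSup ((Set.finite_range (liftOpNorm V)).subset
    (by rintro _ ⟨J, -, rfl⟩; exact ⟨J, rfl⟩)).bddAbove ⟨I, hI, rfl⟩

variable [DecidableEq ι]

theorem liftRatio_eq_sqrt (z : ι → ℝ) :
    liftRatio I z = √((z ⬝ᵥ z) / (coordProj I z ⬝ᵥ coordProj I z)) := by
  rw [liftRatio, norm2_eq_sqrt_dotProduct, sum_sq_eq_coordProj_dotProduct,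
    Real.sqrt_div' _ (dotProduct_self_nonneg _)]

end LiftRange

section LiftRatioMaximizer

variable {ι : Type*} [Fintype ι] [DecidableEq ι] {V : Submodule ℝ (ι → ℝ)} {I : Finset ι}
  {z : ι → ℝ}

theorem coordProj_dotProduct_self_pos (hz : z ∈ liftRange V I) (hz0 : z ≠ 0) :
    0 < coordProj I z ⬝ᵥ coordProj I z := by
  refine (dotProduct_self_nonneg _).lt_of_ne' (mt dotProduct_self_eq_zero.1 fun hP => hz0 ?_)
  exact dotProduct_self_eq_zero.1 <| hz.2 z <| mem_vanishingOn.2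
    ⟨hz.1, fun i hi => by simpa [hi] using congr_fun hP i⟩

variable (V I) in
def IsLiftRatioMaximizer (z : ι → ℝ) : Prop :=
  z ∈ liftRange V I ∧ z ≠ 0 ∧ ∀ w ∈ liftRange V I,
    (w ⬝ᵥ w) * (coordProj I z ⬝ᵥ coordProj I z) ≤ (z ⬝ᵥ z) * (coordProj I w ⬝ᵥ coordProj I w)

theorem exists_isLiftRatioMaximizer (h : liftRange V I ≠ ⊥) :
    ∃ z, IsLiftRatioMaximizer V I z := by
  obtain ⟨z, hz, hz0, hmax⟩ := Submodule.exists_forall_le_of_smul_invariant h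
    (f := fun w => (w ⬝ᵥ w) / (coordProj I w ⬝ᵥ coordProj I w))
    (ContinuousOn.div (by fun_prop) (by fun_prop)
      fun w ⟨hw, hw0⟩ => (coordProj_dotProduct_self_pos hw hw0).ne')
    fun c hc w => by
      simp only [map_smul, smul_dotProduct, dotProduct_smul, smul_eq_mul, ← mul_assoc]
      exact mul_div_mul_left _ _ (mul_self_ne_zero.2 hc.ne')
  refine ⟨z, hz, hz0, fun w hw => ?_⟩
  rcases eq_or_ne w 0 with rfl | hw0
  · simp
  exact (div_le_div_iff₀ (coordProj_dotProduct_self_pos hw hw0)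
    (coordProj_dotProduct_self_pos hz hz0)).1 (hmax w hw hw0)

namespace IsLiftRatioMaximizer

variable (hz : IsLiftRatioMaximizer V I z)
include hz

theorem isGreatest : IsGreatest (liftRatio I '' liftRange V I) (liftRatio I z) := by
  refine ⟨⟨z, hz.1, rfl⟩, ?_⟩
  rintro _ ⟨w, hw, rfl⟩
  rcases eq_or_ne w 0 with rfl | hw0
  · rw [liftRatio_zero, liftRatio_eq_sqrt]
    exact Real.sqrt_nonneg _
  rw [liftRatio_eq_sqrt, liftRatio_eq_sqrt]
  exact Real.sqrt_le_sqrt <| (div_le_div_iff₀ (coordProj_dotProduct_self_pos hw hw0)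
    (coordProj_dotProduct_self_pos hz.1 hz.2.1)).2 (hz.2.2 w hw)

theorem liftOpNorm_eq : liftOpNorm V I = liftRatio I z := by
  rw [liftOpNorm_eq_sSup, hz.isGreatest.csSup_eq]

theorem mul_dotProduct_eq {u : ι → ℝ} (hu : u ∈ V) :
    (coordProj I z ⬝ᵥ coordProj I z) * (coordProj Iᶜ z ⬝ᵥ u) =
      (coordProj Iᶜ z ⬝ᵥ coordProj Iᶜ z) * (coordProj I z ⬝ᵥ u) := by
  obtain ⟨u₁, hu₁, u₂, hu₂, rfl⟩ := (Submodule.mem_sup (p := vanishingOn V I)).1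
    (by rwa [vanishingOn_sup_liftRange])
  have hPu₁ : coordProj I u₁ = 0 := by
    ext i; by_cases hi : i ∈ I <;> simp [hi, (mem_vanishingOn.1 hu₁).2 i]
  have hzu₁ : z ⬝ᵥ u₁ = 0 := (dotProduct_comm _ _).trans (hz.1.2 u₁ hu₁)
  have hPzu₁ : coordProj I z ⬝ᵥ u₁ = 0 := by rw [coordProj_dotProduct, hPu₁, dotProduct_zero]
  have hQzu₁ : coordProj Iᶜ z ⬝ᵥ u₁ = 0 := by
    rwa [dotProduct_eq_add (I := I), hPzu₁, zero_add] at hzu₁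
  have hu₂ := dotProduct_mul_eq_of_forall_le _ _ hz.1 hz.2.2 hu₂
  rw [coordProj_dotProduct_coordProj z u₂, dotProduct_self_eq_add (I := I) z,
    dotProduct_eq_add (I := I) z] at hu₂
  rw [dotProduct_add, dotProduct_add, hPzu₁, hQzu₁]
  linear_combination hu₂

theorem exists_liftRange_orthComp (hQ : coordProj Iᶜ z ≠ 0) :
    ∃ y ∈ liftRange (orthComp V) Iᶜ, liftRatio Iᶜ y = liftRatio I z := by
  set a := coordProj I z ⬝ᵥ coordProj I z
  set b := coordProj Iᶜ z ⬝ᵥ coordProj Iᶜ z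
  refine ⟨b • coordProj I z - a • coordProj Iᶜ z, ⟨fun u hu => ?_, fun u hu => ?_⟩, ?_⟩
  · change u ⬝ᵥ _ = 0
    rw [dotProduct_sub, dotProduct_smul, dotProduct_smul, dotProduct_comm u, dotProduct_comm u,
      smul_eq_mul, smul_eq_mul, hz.mul_dotProduct_eq hu, sub_self]
  · obtain ⟨hu, huI⟩ := mem_vanishingOn.1 hu
    have hQu : coordProj Iᶜ u = 0 := by
      ext i; by_cases hi : i ∈ Iᶜ <;> simp [hi, huI i]
    have hPu : coordProj I u = u := by
      simpa [hQu] using coordProj_add_coordProj_compl (I := I) u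
    change u ⬝ᵥ _ = 0
    rw [dotProduct_sub, dotProduct_smul, dotProduct_smul, ← coordProj_dotProduct,
      ← coordProj_dotProduct, hPu, hQu, zero_dotProduct, dotProduct_comm,
      show z ⬝ᵥ u = 0 from hu z hz.1.1]
    simp
  · have ha : 0 < a := coordProj_dotProduct_self_pos hz.1 hz.2.1
    have hb : 0 < b := (dotProduct_self_nonneg _).lt_of_ne' (mt dotProduct_self_eq_zero.1 hQ)
    have hQP : coordProj Iᶜ (coordProj I z) = 0 := by
      rw [coordProj_coordProj, Finset.inter_comm, Finset.inter_compl, coordProj_empty,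
        LinearMap.zero_apply]
    rw [liftRatio_eq_sqrt, liftRatio_eq_sqrt, dotProduct_self_eq_add (I := I),
      dotProduct_self_eq_add (I := I) z]
    simp only [map_sub, map_smul, hQP, coordProj_coordProj, Finset.inter_self, Finset.inter_compl,
      coordProj_empty, LinearMap.zero_apply, smul_zero, sub_zero, zero_sub, neg_dotProduct,
      dotProduct_neg, smul_dotProduct, dotProduct_smul, smul_eq_mul]
    simp only [a, b] at ha hb ⊢
    congr 1
    field_simp
    ring

end IsLiftRatioMaximizer

theorem liftRatio_le_liftOpNorm {w : ι → ℝ} (hw : w ∈ liftRange V I) :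
    liftRatio I w ≤ liftOpNorm V I := by
  by_cases h : liftRange V I = ⊥
  · rw [h, Submodule.mem_bot] at hw
    rw [liftOpNorm_eq_zero h, hw, liftRatio_zero]
  obtain ⟨z, hz⟩ := exists_isLiftRatioMaximizer h
  rw [liftOpNorm_eq_sSup]
  exact le_csSup hz.isGreatest.bddAbove ⟨w, hw, rfl⟩

theorem liftRatio_eq_one (hP : coordProj I z ≠ 0) (hQ : coordProj Iᶜ z = 0) :
    liftRatio I z = 1 := by
  have hz : coordProj I z = z := by simpa [hQ] using coordProj_add_coordProj_compl (I := I) z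
  rw [liftRatio_eq_sqrt, hz, div_self (mt dotProduct_self_eq_zero.1 (hz ▸ hP)), Real.sqrt_one]

end LiftRatioMaximizer

section ChiBar

variable {ι : Type*} [Fintype ι] [DecidableEq ι] {V : Submodule ℝ (ι → ℝ)}

theorem one_le_chiBar (hV : V ≠ ⊥) : 1 ≤ chiBar V := by
  obtain ⟨z, hz, hz0⟩ := V.ne_bot_iff.1 hV
  obtain ⟨i, -⟩ := Function.ne_iff.1 hz0
  have hz' : z ∈ liftRange V Finset.univ := ⟨hz, fun u hu => by
    simp [show u = 0 from funext fun j => (mem_vanishingOn.1 hu).2 j (Finset.mem_univ j)]⟩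
  calc 1 = liftRatio Finset.univ z := (liftRatio_eq_one (by simpa using hz0) (by simp)).symm
    _ ≤ liftOpNorm V Finset.univ := liftRatio_le_liftOpNorm hz'
    _ ≤ chiBar V := liftOpNorm_le_chiBar ⟨i, Finset.mem_univ i⟩

theorem liftOpNorm_le_chiBar_orthComp (hV : orthComp V ≠ ⊥) (I : Finset ι) :
    liftOpNorm V I ≤ chiBar (orthComp V) := by
  by_cases h : liftRange V I = ⊥
  · rw [liftOpNorm_eq_zero h]
    exact zero_le_one.trans (one_le_chiBar hV)
  obtain ⟨z, hz⟩ := exists_isLiftRatioMaximizer h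
  rw [hz.liftOpNorm_eq]
  by_cases hQ : coordProj Iᶜ z = 0
  · rw [liftRatio_eq_one (mt dotProduct_self_eq_zero.2
      (coordProj_dotProduct_self_pos hz.1 hz.2.1).ne') hQ]
    exact one_le_chiBar hV
  obtain ⟨y, hy, hyz⟩ := hz.exists_liftRange_orthComp hQ
  obtain ⟨i, hi⟩ := Function.ne_iff.1 hQ
  rw [← hyz]
  refine (liftRatio_le_liftOpNorm hy).trans (liftOpNorm_le_chiBar ⟨i, ?_⟩)
  by_contra hiI
  simp [hiI] at hi

theorem chiBar_le_chiBar_orthComp (hV : orthComp V ≠ ⊥) : chiBar V ≤ chiBar (orthComp V) :=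
  Real.sSup_le (by rintro _ ⟨I, -, rfl⟩; exact liftOpNorm_le_chiBar_orthComp hV I)
    (zero_le_one.trans (one_le_chiBar hV))

theorem chiBar_orthComp (hV : V ≠ ⊥) (hV' : V ≠ ⊤) : chiBar (orthComp V) = chiBar V := by
  refine le_antisymm ?_ (chiBar_le_chiBar_orthComp (orthComp_ne_bot hV'))
  simpa only [orthComp_orthComp] using
    chiBar_le_chiBar_orthComp (V := orthComp V) (by rwa [orthComp_orthComp])

end ChiBar

/-- self-duality: for `{0} ≠ W ≠ ℝ^n`, `κ_W = κ_{W^⊥}` and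
`χ̄_W = χ̄_{W^⊥}`. -/
theorem kappa_chiBar_self_dual {n : ℕ} (W : Submodule ℝ (Fin n → ℝ))
    (hW0 : W ≠ ⊥) (hWtop : W ≠ ⊤) :
    kappa W = kappa (orthComp W) ∧ chiBar W = chiBar (orthComp W) :=
  ⟨kappa_orthComp.symm, (chiBar_orthComp hW0 hWtop).symm⟩
end
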